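/- arXiv:2509.06474 — 4 statements merged into one kernel-verified Lean document; each statement's English description precedes it below -/
import Mathlib

section
/- Let δ ∈ (0,1], t ∈ [1,2), θ₀ ∈ S¹, and let L ⊂ ℝ² be a segment of length δ^(1-t/2) with direction θ₀. Let S be the union of all closed axis-parallel squares of side δ intersecting L. Then for every θ ∈ S¹ with |θ - θ₀| ≤ δ^(t/2), we have diam(πθ(S)) ≤ Cδ for an absolute constant C (e.g. C = 10). -/
/-! Each δ-square has diameter at most 2δ and the projection is 1-Lipschitz, so a square projects
into an interval of length 2δ around the image of a point of `L`. Since `πθ θ = 0`, the segment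
projects onto an interval of length
`δ^(1-t/2) |πθ θ₀| = δ^(1-t/2) |πθ (θ₀ - θ)| ≤ δ^(1-t/2) δ^(t/2) = δ`.
Chaining the two estimates gives `diam πθ(S) ≤ 2δ + δ + 2δ`. -/

open MeasureTheory Metric Set Filter

noncomputable def perp (θ : EuclideanSpace ℝ (Fin 2)) : EuclideanSpace ℝ (Fin 2) :=
  (WithLp.equiv 2 (Fin 2 → ℝ)).symm ![-θ 1, θ 0]

/-- Orthogonal projection onto span(θ^⊥), viewed as a map to ℝ. -/
noncomputable def proj (θ x : EuclideanSpace ℝ (Fin 2)) : ℝ := inner ℝ x (perp θ)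

/-- The closed dyadic δ-square [jδ,(j+1)δ] × [kδ,(k+1)δ]. -/
def dsq (δ : ℝ) (j k : ℤ) : Set (EuclideanSpace ℝ (Fin 2)) :=
  {x | x 0 ∈ Set.Icc (j * δ) ((j + 1) * δ) ∧ x 1 ∈ Set.Icc (k * δ) ((k + 1) * δ)}

lemma proj_apply (θ x : EuclideanSpace ℝ (Fin 2)) : proj θ x = θ 0 * x 1 - θ 1 * x 0 := by
  simp [proj, perp, PiLp.inner_apply, Fin.sum_univ_two]
  ring

lemma proj_self (θ : EuclideanSpace ℝ (Fin 2)) : proj θ θ = 0 := by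
  rw [proj_apply]; ring

lemma proj_eq_affineMap (θ : EuclideanSpace ℝ (Fin 2)) :
    proj θ = (innerSL ℝ (perp θ) : EuclideanSpace ℝ (Fin 2) →ₗ[ℝ] ℝ).toAffineMap := by
  ext x; simp [proj, real_inner_comm]

lemma proj_sub (θ x y : EuclideanSpace ℝ (Fin 2)) : proj θ (x - y) = proj θ x - proj θ y :=
  inner_sub_left x y (perp θ)

lemma norm_perp (θ : EuclideanSpace ℝ (Fin 2)) : ‖perp θ‖ = ‖θ‖ := by
  simp [EuclideanSpace.norm_eq, perp, Fin.sum_univ_two, add_comm]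

lemma abs_proj_le (θ x : EuclideanSpace ℝ (Fin 2)) : |proj θ x| ≤ ‖θ‖ * ‖x‖ := by
  simpa [proj, norm_perp, mul_comm] using abs_real_inner_le_norm x (perp θ)

lemma abs_proj_sub_le (θ x y : EuclideanSpace ℝ (Fin 2)) :
    |proj θ x - proj θ y| ≤ ‖θ‖ * dist x y := by
  simpa [proj_sub, dist_eq_norm] using abs_proj_le θ (x - y)

lemma abs_proj_le_norm_sub (θ φ : EuclideanSpace ℝ (Fin 2)) : |proj θ φ| ≤ ‖θ‖ * ‖θ - φ‖ := by
  have : proj θ φ = -proj θ (θ - φ) := by rw [proj_sub, proj_self]; ring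
  rw [this, abs_neg]
  exact abs_proj_le θ (θ - φ)

lemma abs_proj_sub_le_of_mem_segment {θ a b p q : EuclideanSpace ℝ (Fin 2)}
    (hp : p ∈ segment ℝ a b) (hq : q ∈ segment ℝ a b) :
    |proj θ p - proj θ q| ≤ |proj θ (b - a)| := by
  have h := image_segment ℝ (innerSL ℝ (perp θ) : _ →ₗ[ℝ] ℝ).toAffineMap a b
  rw [← proj_eq_affineMap, segment_eq_uIcc] at h
  rw [proj_sub, abs_sub_comm (proj θ b)]
  exact Real.dist_le_of_mem_uIcc (h ▸ mem_image_of_mem _ hp) (h ▸ mem_image_of_mem _ hq)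

lemma dist_le_of_mem_dsq {δ : ℝ} (hδ : 0 ≤ δ) {j k : ℤ} {x y : EuclideanSpace ℝ (Fin 2)}
    (hx : x ∈ dsq δ j k) (hy : y ∈ dsq δ j k) : dist x y ≤ 2 * δ := by
  obtain ⟨⟨hx0, hx0'⟩, hx1, hx1'⟩ := hx
  obtain ⟨⟨hy0, hy0'⟩, hy1, hy1'⟩ := hy
  rw [EuclideanSpace.dist_eq, Fin.sum_univ_two, Real.sqrt_le_iff]
  simp only [Real.dist_eq, sq_abs]
  constructor
  · positivity
  · push_cast at *; nlinarith

lemma abs_proj_sub_le_of_mem_dsq (θ : EuclideanSpace ℝ (Fin 2)) {δ : ℝ} (hδ : 0 ≤ δ) {j k : ℤ}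
    {x y : EuclideanSpace ℝ (Fin 2)} (hx : x ∈ dsq δ j k) (hy : y ∈ dsq δ j k) :
    |proj θ x - proj θ y| ≤ ‖θ‖ * (2 * δ) :=
  (abs_proj_sub_le θ x y).trans (by gcongr; exact dist_le_of_mem_dsq hδ hx hy)

lemma abs_proj_sub_le_of_mem_segment_add_smul (θ φ : EuclideanSpace ℝ (Fin 2)) {r : ℝ} (hr : 0 ≤ r)
    {a p q : EuclideanSpace ℝ (Fin 2)} (hp : p ∈ segment ℝ a (a + r • φ))
    (hq : q ∈ segment ℝ a (a + r • φ)) :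
    |proj θ p - proj θ q| ≤ r * (‖θ‖ * ‖θ - φ‖) :=
  calc |proj θ p - proj θ q| ≤ |proj θ (a + r • φ - a)| := abs_proj_sub_le_of_mem_segment hp hq
    _ = r * |proj θ φ| := by
      rw [add_sub_cancel_left, proj, real_inner_smul_left, abs_mul, abs_of_nonneg hr, proj]
    _ ≤ r * (‖θ‖ * ‖θ - φ‖) := by gcongr; exact abs_proj_le_norm_sub θ φ

theorem stmt_1_general (δ t : ℝ) (hδ : δ ∈ Set.Ioc (0:ℝ) 1)
    (θ₀ θ a b : EuclideanSpace ℝ (Fin 2)) (hθ : ‖θ‖ = 1)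
    (hdir : b = a + (δ ^ (1 - t/2)) • θ₀)
    (hclose : ‖θ - θ₀‖ ≤ δ ^ (t/2)) :
    Metric.diam (proj θ ''
      (⋃ (j : ℤ) (k : ℤ) (_ : (dsq δ j k ∩ segment ℝ a b).Nonempty), dsq δ j k))
      ≤ 10 * δ := by
  have hδ₀ : 0 < δ := hδ.1
  have hseg {p q} (hp : p ∈ segment ℝ a b) (hq : q ∈ segment ℝ a b) :
      |proj θ p - proj θ q| ≤ δ := by
    subst hdir
    calc |proj θ p - proj θ q| ≤ δ ^ (1 - t/2) * (‖θ‖ * ‖θ - θ₀‖) :=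
          abs_proj_sub_le_of_mem_segment_add_smul θ θ₀ (by positivity) hp hq
      _ ≤ δ ^ (1 - t/2) * δ ^ (t/2) := by rw [hθ, one_mul]; gcongr
      _ = δ := by rw [← Real.rpow_add hδ₀]; norm_num
  refine diam_le_of_forall_dist_le (by positivity) ?_
  rintro _ ⟨x, hx, rfl⟩ _ ⟨y, hy, rfl⟩
  simp only [mem_iUnion] at hx hy
  obtain ⟨j, k, ⟨p, hp, hpL⟩, hx⟩ := hx
  obtain ⟨j', k', ⟨q, hq, hqL⟩, hy⟩ := hy
  have hxp := abs_proj_sub_le_of_mem_dsq θ hδ₀.le hx hp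
  have hqy := abs_proj_sub_le_of_mem_dsq θ hδ₀.le hq hy
  rw [hθ, one_mul] at hxp hqy
  rw [Real.dist_eq]
  linarith [abs_sub_le (proj θ x) (proj θ p) (proj θ y),
    abs_sub_le (proj θ p) (proj θ q) (proj θ y), hseg hpL hqL]

theorem stmt_1 (δ t : ℝ) (hδ : δ ∈ Set.Ioc (0:ℝ) 1) (ht : t ∈ Set.Ico (1:ℝ) 2)
    (θ₀ θ a b : EuclideanSpace ℝ (Fin 2)) (hθ₀ : ‖θ₀‖ = 1) (hθ : ‖θ‖ = 1)
    (hdir : b = a + (δ ^ (1 - t/2)) • θ₀)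
    (hclose : ‖θ - θ₀‖ ≤ δ ^ (t/2)) :
    Metric.diam (proj θ ''
      (⋃ (j : ℤ) (k : ℤ) (_ : (dsq δ j k ∩ segment ℝ a b).Nonempty), dsq δ j k))
      ≤ 10 * δ :=
  stmt_1_general δ t hδ θ₀ θ a b hθ hdir hclose
end

section
/- Let δ ∈ (0,1] with δ = 2^{-N}, t ∈ [1,2). There exists a finite family P of dyadic δ-squares contained in [0,1]², with |P| ≥ c·δ^{-t} for an absolute constant c > 0, such that P is a (δ,t)-set with absolute constant C (i.e. |{p ∈ P : p ∩ B(x,r) ≠ ∅}| ≤ C(r/δ)^t for all x ∈ ℝ² and δ ≤ r ≤ 1), and for every θ ∈ S¹ there exist an interval I_θ ⊂ ℝ with |I_θ| ≤ Cδ and a subfamily S(θ) ⊂ P with |S(θ)| ≥ c·δ^{-t/2} satisfying πθ(∪S(θ)) ⊂ I_θ. -/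
open MeasureTheory Metric Set Filter

/-- The unit square [0,1]². -/
def unitSq : Set (EuclideanSpace ℝ (Fin 2)) :=
  {x | x 0 ∈ Set.Icc (0:ℝ) 1 ∧ x 1 ∈ Set.Icc (0:ℝ) 1}

/-!
Put `K ≈ δ^(-t/2)` and let `J = K² δ`. For every slope `i / K` with `|i| ≤ K` take a segment of
`K` consecutive `δ`-squares (length `K δ`), together with its mirror image in the diagonal;
the segments are laid side by side in about `2 J` rows spaced `1 / (8 J)` apart, and a grid of
`K²` squares of spacing `1 / K` is added to make `|P| ≳ δ^(-t)`. A `δ`-tube in direction `θ`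
contains the whole segment whose slope is within `1 / (2 K)` of that of `θ`. A ball of radius
`r` meets at most `r / δ` columns and `r J + 1` rows, hence `≲ (r / δ)(r J + 1) = (r K)² + r / δ`
squares of the segments, and `(r K)² ≲ r² δ^(-t) ≤ (r / δ)^t`. Capping `K` at `δ^(-1) / 16`
keeps the segments inside the unit square; for `δ > 2^(-8)` a single square suffices.
-/

lemma proj_eq (θ z : EuclideanSpace ℝ (Fin 2)) : proj θ z = z 1 * θ 0 - z 0 * θ 1 := by
  simp [proj, perp, PiLp.inner_apply, Fin.sum_univ_two]
  ring

lemma abs_apply_le_one {θ : EuclideanSpace ℝ (Fin 2)} (hθ : ‖θ‖ = 1) (i : Fin 2) : |θ i| ≤ 1 :=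
  hθ ▸ PiLp.norm_apply_le θ i

noncomputable def cell (δ : ℝ) (p : ℝ × ℝ) : ℤ × ℤ := (⌊p.1 / δ⌋, ⌊p.2 / δ⌋)

section Cells

variable {δ : ℝ}

lemma cell_fst_intCast_mul (hδ : δ ≠ 0) (n : ℤ) (y : ℝ) : (cell δ (n * δ, y)).1 = n := by
  simp [cell, hδ]

lemma cell_swap (p : ℝ × ℝ) : cell δ p.swap = (cell δ p).swap := rfl

lemma cell_intCast_mul (hδ : δ ≠ 0) (m n : ℤ) : cell δ (m * δ, n * δ) = (m, n) := by
  simp [cell, hδ]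

lemma abs_sub_le_of_mem_dsq_cell (hδ : 0 < δ) {p : ℝ × ℝ} {z : EuclideanSpace ℝ (Fin 2)}
    (hz : z ∈ dsq δ (cell δ p).1 (cell δ p).2) : |z 0 - p.1| ≤ δ ∧ |z 1 - p.2| ≤ δ := by
  have key : ∀ {w a : ℝ}, w ∈ Icc (⌊a / δ⌋ * δ) ((⌊a / δ⌋ + 1) * δ) → |w - a| ≤ δ := by
    intro w a ⟨hw₁, hw₂⟩
    have h₁ := mul_le_mul_of_nonneg_right (Int.floor_le (a / δ)) hδ.le
    have h₂ := mul_le_mul_of_nonneg_right (Int.lt_floor_add_one (a / δ)).le hδ.le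
    rw [div_mul_cancel₀ _ hδ.ne'] at h₁ h₂
    rw [abs_le]
    constructor <;> linarith
  exact ⟨key hz.1, key hz.2⟩

lemma dsq_cell_subset_unitSq {n : ℤ} (hn : 0 < n) {p : ℝ × ℝ} (hp : p ∈ Ico (0 : ℝ) 1 ×ˢ Ico 0 1) :
    dsq (n : ℝ)⁻¹ (cell (n : ℝ)⁻¹ p).1 (cell (n : ℝ)⁻¹ p).2 ⊆ unitSq := by
  have hn' : (0 : ℝ) < n := by exact_mod_cast hn
  have key : ∀ a ∈ Ico (0 : ℝ) 1,
      Icc (⌊a / (n : ℝ)⁻¹⌋ * (n : ℝ)⁻¹) ((⌊a / (n : ℝ)⁻¹⌋ + 1) * (n : ℝ)⁻¹) ⊆ Icc 0 1 := by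
    intro a ⟨ha₀, ha₁⟩
    rw [div_inv_eq_mul]
    have h₀ : (0 : ℝ) ≤ ⌊a * n⌋ := by exact_mod_cast Int.floor_nonneg.mpr (by positivity)
    have h₁ : (⌊a * n⌋ : ℝ) + 1 ≤ n := by
      have : ⌊a * n⌋ < n := Int.floor_lt.mpr (by nlinarith)
      exact_mod_cast this
    refine Icc_subset_Icc (by positivity) ?_
    calc ((⌊a * n⌋ : ℝ) + 1) * (n : ℝ)⁻¹ ≤ n * (n : ℝ)⁻¹ := by gcongr
      _ = 1 := mul_inv_cancel₀ hn'.ne'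
  exact fun z hz => ⟨key p.1 hp.1 hz.1, key p.2 hp.2 hz.2⟩

lemma proj_mem_Icc_of_mem_dsq_cell (hδ : 0 < δ) {θ : EuclideanSpace ℝ (Fin 2)}
    (hθ₀ : |θ 0| ≤ 1) (hθ₁ : |θ 1| ≤ 1) {p : ℝ × ℝ} {c a : ℝ}
    (hp : |p.2 * θ 0 - p.1 * θ 1 - c| ≤ a) {z : EuclideanSpace ℝ (Fin 2)}
    (hz : z ∈ dsq δ (cell δ p).1 (cell δ p).2) :
    proj θ z ∈ Icc (c - (a + 2 * δ)) (c + (a + 2 * δ)) := by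
  obtain ⟨h₀, h₁⟩ := abs_sub_le_of_mem_dsq_cell hδ hz
  have e₀ : |(z 1 - p.2) * θ 0| ≤ δ := by
    rw [abs_mul]; nlinarith [abs_nonneg (z 1 - p.2), abs_nonneg (θ 0)]
  have e₁ : |(z 0 - p.1) * θ 1| ≤ δ := by
    rw [abs_mul]; nlinarith [abs_nonneg (z 0 - p.1), abs_nonneg (θ 1)]
  have : proj θ z - c = (p.2 * θ 0 - p.1 * θ 1 - c) + (z 1 - p.2) * θ 0 - (z 0 - p.1) * θ 1 := by
    rw [proj_eq]; ring
  rw [mem_Icc]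
  obtain ⟨hp₁, hp₂⟩ := abs_le.mp hp
  obtain ⟨e₀₁, e₀₂⟩ := abs_le.mp e₀
  obtain ⟨e₁₁, e₁₂⟩ := abs_le.mp e₁
  constructor <;> linarith

end Cells

def hits (δ : ℝ) (P : Finset (ℤ × ℤ)) (x : EuclideanSpace ℝ (Fin 2)) (r : ℝ) : Set (ℤ × ℤ) :=
  {q | q ∈ P ∧ (dsq δ q.1 q.2 ∩ closedBall x r).Nonempty}

section Counting

variable {δ r : ℝ}

lemma hits_union (P P' : Finset (ℤ × ℤ)) (x : EuclideanSpace ℝ (Fin 2)) :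
    hits δ (P ∪ P') x r = hits δ P x r ∪ hits δ P' x r := by
  ext q
  simp only [hits, Finset.mem_union, mem_ofPred_eq, mem_union, or_and_right]

lemma ncard_hits_le_card (P : Finset (ℤ × ℤ)) (x : EuclideanSpace ℝ (Fin 2)) :
    (hits δ P x r).ncard ≤ P.card := by
  simpa using Set.ncard_le_ncard (fun q (hq : q ∈ hits δ P x r) => hq.1) P.finite_toSet

lemma ncard_hits_image_cell_le {ι : Type*} [DecidableEq ι] (hδ : 0 < δ) (hr : δ ≤ r)
    (s : Finset ι) (p : ι → ℝ × ℝ) (x : EuclideanSpace ℝ (Fin 2)) :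
    (hits δ (s.image fun i => cell δ (p i)) x r).ncard ≤
      (s.filter fun i => |(p i).1 - x 0| ≤ 2 * r ∧ |(p i).2 - x 1| ≤ 2 * r).card := by
  classical
  have hsub : hits δ (s.image fun i => cell δ (p i)) x r ⊆
      ↑((s.filter fun i => |(p i).1 - x 0| ≤ 2 * r ∧ |(p i).2 - x 1| ≤ 2 * r).image
        fun i => cell δ (p i)) := by
    rintro _ ⟨hq, z, hz, hzx⟩
    obtain ⟨i, hi, rfl⟩ := Finset.mem_image.mp hq
    obtain ⟨h₀, h₁⟩ := abs_sub_le_of_mem_dsq_cell hδ hz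
    have hcoord : ∀ k, |z k - x k| ≤ r := fun k =>
      (PiLp.norm_apply_le (z - x) k).trans (by rwa [← dist_eq_norm, ← mem_closedBall])
    have near : ∀ k (a : ℝ), |z k - a| ≤ δ → |a - x k| ≤ 2 * r := fun k a ha => by
      have := abs_sub_le a (z k) (x k)
      rw [abs_sub_comm] at ha
      linarith [hcoord k]
    exact Finset.mem_image.mpr ⟨i, Finset.mem_filter.mpr ⟨hi, near 0 _ h₀, near 1 _ h₁⟩, rfl⟩
  exact (Set.ncard_le_ncard hsub (Finset.finite_toSet _)).trans
    ((Set.ncard_coe_finset _).trans_le Finset.card_image_le)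

lemma card_filter_abs_le (s : Finset ℤ) {f : ℤ → ℝ} {γ R : ℝ} (c : ℝ) (hγ : 0 < γ) (hR : 0 ≤ R)
    (hf : ∀ n, f n = n * γ + c) :
    ((s.filter fun n => |f n| ≤ R).card : ℝ) ≤ 2 * R / γ + 1 := by
  have hsub : s.filter (fun n => |f n| ≤ R) ⊆ Finset.Icc ⌈(-R - c) / γ⌉ ⌊(R - c) / γ⌋ := by
    intro n hn
    obtain ⟨h₁, h₂⟩ := abs_le.mp (Finset.mem_filter.mp hn).2
    rw [hf] at h₁ h₂
    rw [Finset.mem_Icc, Int.ceil_le, Int.le_floor, div_le_iff₀ hγ, le_div_iff₀ hγ]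
    constructor <;> linarith
  have hcard : ((Finset.Icc ⌈(-R - c) / γ⌉ ⌊(R - c) / γ⌋).card : ℝ) ≤ 2 * R / γ + 1 := by
    rw [Int.card_Icc, ← Int.cast_natCast, Int.toNat_eq_max, Int.cast_max, Int.cast_zero]
    refine max_le ?_ (by positivity)
    have h₁ := Int.floor_le ((R - c) / γ)
    have h₂ := Int.le_ceil ((-R - c) / γ)
    have : (R - c) / γ - (-R - c) / γ = 2 * R / γ := by ring
    push_cast
    linarith
  exact (Nat.cast_le.mpr (Finset.card_le_card hsub)).trans hcard

lemma card_filter_product_le {α β : Type*} (A : Finset α) (B : Finset β) (p : α → Prop)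
    [DecidablePred p] (q : α → β → Prop) [∀ a, DecidablePred (q a)] {M : ℝ}
    (hM : ∀ a ∈ A, p a → ((B.filter (q a)).card : ℝ) ≤ M) :
    (((A ×ˢ B).filter fun ab => p ab.1 ∧ q ab.1 ab.2).card : ℝ) ≤ (A.filter p).card * M := by
  rw [Finset.natCast_card_filter, Finset.sum_product, Finset.natCast_card_filter, Finset.sum_mul]
  refine Finset.sum_le_sum fun a ha => ?_
  by_cases hpa : p a
  · simp only [hpa, true_and, if_true, one_mul]
    simpa only [Finset.natCast_card_filter] using hM a ha hpa
  · simp [hpa]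

end Counting

lemma exists_int_abs_mul_sub_le {u v : ℝ} (hu : |u| ≤ 1) (hvu : |v| ≤ |u|) {K : ℤ} (hK : 0 ≤ K) :
    ∃ i : ℤ, |i| ≤ K ∧ |i * u - K * v| ≤ 1 / 2 := by
  rcases eq_or_ne u 0 with rfl | hu₀
  · refine ⟨0, by simpa using hK, ?_⟩
    rw [abs_zero] at hvu
    simp [abs_nonpos_iff.mp hvu]
  · have hu' : 0 < |u| := abs_pos.mpr hu₀
    have hK' : (0 : ℝ) ≤ K := by exact_mod_cast hK
    have hround := abs_sub_round (K * v / u)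
    have hratio : |K * v / u| ≤ K := by
      rw [abs_div, abs_mul, abs_of_nonneg hK', div_le_iff₀ hu']
      exact mul_le_mul_of_nonneg_left hvu hK'
    refine ⟨round (K * v / u), ?_, ?_⟩
    · have : (|round (K * v / u)| : ℝ) < K + 1 := by
        have := abs_sub_abs_le_abs_sub (round (K * v / u) : ℝ) (K * v / u)
        rw [abs_sub_comm] at hround
        linarith
      exact Int.lt_add_one_iff.mp (by exact_mod_cast this)
    · have : (round (K * v / u) : ℝ) * u - K * v = (round (K * v / u) - K * v / u) * u := by
        field_simp
      rw [this, abs_mul, abs_sub_comm]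
      nlinarith [abs_nonneg (K * v / u - round (K * v / u))]

namespace TrainTrack

noncomputable section

variable (Q J : ℤ)

def mesh : ℝ := ((Q ^ 2 * J : ℤ) : ℝ)⁻¹

def gridIndex : Finset (ℤ × ℤ) := Finset.Ico 0 (Q * J) ×ˢ Finset.Ico 0 (Q * J)

def gridPt (d : ℤ × ℤ) : ℝ × ℝ :=
  ((d.1 * Q : ℤ) * mesh Q J, (d.2 * Q : ℤ) * mesh Q J)

def trackIndex : Finset (ℤ × ℤ) := Finset.Ico 0 (Q ^ 2 * J) ×ˢ Finset.Icc (-J) J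

def trackSlope (X j : ℤ) : ℤ := Q * j + X / (Q * J)

/-- With `K = Q * J`, column `X = a * K + ℓ` (`0 ≤ a < Q`, `0 ≤ ℓ < K`) of row `j` holds the
`ℓ`-th point of a segment of slope `(Q * j + a) / K` starting at height `1 / 2 + j / (8 * J)`;
every slope `i / K` with `|i| ≤ K` occurs, and the rows are `1 / (8 * J)` apart. -/
def trackPt (d : ℤ × ℤ) : ℝ × ℝ :=
  (d.1 * mesh Q J,
    1 / 2 + d.2 / (8 * J) + trackSlope Q J d.1 d.2 / (Q * J) * (d.1 % (Q * J) : ℤ) * mesh Q J)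

def trainTracks : Finset (ℤ × ℤ) :=
  (gridIndex Q J).image (fun d => cell (mesh Q J) (gridPt Q J d)) ∪
    (trackIndex Q J).image (fun d => cell (mesh Q J) (trackPt Q J d)) ∪
    (trackIndex Q J).image (fun d => cell (mesh Q J) (trackPt Q J d).swap)

def track (i : ℤ) : Finset (ℤ × ℤ) :=
  (Finset.Ico 0 (Q * J)).image fun ℓ => (i % Q * (Q * J) + ℓ, i / Q)

variable {Q J}

lemma mesh_pos (hQ : 0 < Q) (hJ : 0 < J) : 0 < mesh Q J := by
  unfold mesh; positivity

lemma mesh_mul (hQ : 0 < Q) (hJ : 0 < J) : mesh Q J * (Q * (Q * J)) = 1 := by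
  have : (0 : ℝ) < Q ^ 2 * J := by positivity
  rw [mesh, Int.cast_mul, Int.cast_pow]
  field_simp

lemma gridPt_mem (hQ : 0 < Q) (hJ : 0 < J) {d : ℤ × ℤ} (hd : d ∈ gridIndex Q J) :
    gridPt Q J d ∈ Ico (0 : ℝ) 1 ×ˢ Ico 0 1 := by
  have key : ∀ a ∈ Finset.Ico 0 (Q * J), ((a * Q : ℤ) : ℝ) * mesh Q J ∈ Ico (0 : ℝ) 1 := by
    intro a ha
    obtain ⟨ha₀, ha₁⟩ := Finset.mem_Ico.mp ha
    have hδ := mesh_pos hQ hJ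
    have : (a : ℝ) * Q < Q * J * Q := by
      have : (a : ℝ) < Q * J := by exact_mod_cast ha₁
      gcongr
    refine ⟨by push_cast; positivity, ?_⟩
    rw [← mesh_mul hQ hJ]
    push_cast
    nlinarith
  obtain ⟨h₁, h₂⟩ := Finset.mem_product.mp hd
  exact ⟨key _ h₁, key _ h₂⟩

lemma abs_trackSlope_le (hQ : 0 < Q) (hJ : 0 < J) {d : ℤ × ℤ} (hd : d ∈ trackIndex Q J) :
    |trackSlope Q J d.1 d.2| ≤ 2 * (Q * J) := by
  obtain ⟨hX, hj⟩ := Finset.mem_product.mp hd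
  obtain ⟨hX₀, hX₁⟩ := Finset.mem_Ico.mp hX
  obtain ⟨hj₀, hj₁⟩ := Finset.mem_Icc.mp hj
  have hK : 0 < Q * J := mul_pos hQ hJ
  have ha₀ : 0 ≤ d.1 / (Q * J) := Int.ediv_nonneg hX₀ hK.le
  have ha₁ : d.1 / (Q * J) < Q := Int.ediv_lt_of_lt_mul hK (by linarith)
  rw [trackSlope, abs_le]
  constructor <;> nlinarith

lemma trackPt_mem (hQ : 16 ≤ Q) (hJ : 0 < J) {d : ℤ × ℤ} (hd : d ∈ trackIndex Q J) :
    trackPt Q J d ∈ Ico (0 : ℝ) 1 ×ˢ Ico 0 1 := by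
  have hQ₀ : 0 < Q := by linarith
  have hδ := mesh_pos hQ₀ hJ
  have hδK := mesh_mul hQ₀ hJ
  obtain ⟨hX, hj⟩ := Finset.mem_product.mp hd
  obtain ⟨hX₀, hX₁⟩ := Finset.mem_Ico.mp hX
  obtain ⟨hj₀, hj₁⟩ := Finset.mem_Icc.mp hj
  have hQ' : (16 : ℝ) ≤ Q := by exact_mod_cast hQ
  have hJ' : (0 : ℝ) < J := by exact_mod_cast hJ
  have hK : (0 : ℝ) < Q * J := by positivity
  have hrow : |(d.2 : ℝ) / (8 * J)| ≤ 1 / 8 := by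
    rw [abs_div, abs_of_pos (by positivity : (0 : ℝ) < 8 * J), div_le_iff₀ (by positivity)]
    have : |(d.2 : ℝ)| ≤ J := abs_le.mpr ⟨by exact_mod_cast hj₀, by exact_mod_cast hj₁⟩
    linarith
  have hslope : |(trackSlope Q J d.1 d.2 : ℝ) / (Q * J) * (d.1 % (Q * J) : ℤ) * mesh Q J|
      ≤ 1 / 8 := by
    have hs : |(trackSlope Q J d.1 d.2 : ℝ)| ≤ 2 * (Q * J) := by
      exact_mod_cast abs_trackSlope_le hQ₀ hJ hd
    have he₀ : (0 : ℝ) ≤ (d.1 % (Q * J) : ℤ) := by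
      exact_mod_cast Int.emod_nonneg _ (mul_pos hQ₀ hJ).ne'
    have he₁ : ((d.1 % (Q * J) : ℤ) : ℝ) ≤ Q * J := by
      exact_mod_cast (Int.emod_lt_of_pos _ (mul_pos hQ₀ hJ)).le
    rw [abs_mul, abs_mul, abs_div, abs_of_pos hK, abs_of_nonneg he₀, abs_of_pos hδ]
    calc |(trackSlope Q J d.1 d.2 : ℝ)| / (Q * J) * (d.1 % (Q * J) : ℤ) * mesh Q J
        ≤ 2 * (Q * J) / (Q * J) * (Q * J) * mesh Q J := by gcongr
      _ = 2 / Q := by field_simp; linarith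
      _ ≤ 1 / 8 := by rw [div_le_div_iff₀ (by positivity) (by norm_num)]; linarith
  have hX' : (d.1 : ℝ) < Q * (Q * J) := by
    have : d.1 < Q * (Q * J) := by linarith
    exact_mod_cast this
  have hX₀' : (0 : ℝ) ≤ d.1 := by exact_mod_cast hX₀
  simp only [trackPt, mem_prod, mem_Ico]
  refine ⟨⟨by positivity, by nlinarith⟩, ?_, ?_⟩ <;>
    linarith [(abs_le.mp hrow).1, (abs_le.mp hrow).2, (abs_le.mp hslope).1, (abs_le.mp hslope).2]

lemma trainTracks_subset_unitSq (hQ : 16 ≤ Q) (hJ : 0 < J) :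
    ∀ q ∈ trainTracks Q J, dsq (mesh Q J) q.1 q.2 ⊆ unitSq := by
  have hQ₀ : 0 < Q := by linarith
  have hn : 0 < Q ^ 2 * J := by positivity
  intro q hq
  simp only [trainTracks, Finset.mem_union, Finset.mem_image] at hq
  rcases hq with (⟨d, hd, rfl⟩ | ⟨d, hd, rfl⟩) | ⟨d, hd, rfl⟩
  · exact dsq_cell_subset_unitSq hn (gridPt_mem hQ₀ hJ hd)
  · exact dsq_cell_subset_unitSq hn (trackPt_mem hQ hJ hd)
  · obtain ⟨h₁, h₂⟩ := trackPt_mem hQ hJ hd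
    exact dsq_cell_subset_unitSq hn ⟨h₂, h₁⟩

lemma card_trainTracks (hQ : 0 < Q) (hJ : 0 < J) :
    ((Q * J : ℤ) : ℝ) ^ 2 ≤ (trainTracks Q J).card := by
  have hδ := (mesh_pos hQ hJ).ne'
  have hgrid : ((gridIndex Q J).image fun d => cell (mesh Q J) (gridPt Q J d)).card =
      (gridIndex Q J).card := by
    refine Finset.card_image_of_injOn fun d _ d' _ hdd' => ?_
    simp only [gridPt, cell_intCast_mul hδ, Prod.mk.injEq] at hdd'
    exact Prod.ext (mul_right_cancel₀ hQ.ne' hdd'.1) (mul_right_cancel₀ hQ.ne' hdd'.2)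
  have hsub : (gridIndex Q J).image (fun d => cell (mesh Q J) (gridPt Q J d)) ⊆ trainTracks Q J :=
    Finset.subset_union_left.trans Finset.subset_union_left
  have hK : 0 ≤ Q * J := (mul_pos hQ hJ).le
  calc ((Q * J : ℤ) : ℝ) ^ 2 = (gridIndex Q J).card := by
        rw [gridIndex, Finset.card_product, Int.card_Ico, sub_zero, Nat.cast_mul,
          ← Int.cast_natCast, Int.toNat_of_nonneg hK, sq]
    _ ≤ (trainTracks Q J).card := by
        rw [← hgrid]; exact_mod_cast Finset.card_le_card hsub

lemma card_filter_gridIndex_le (hQ : 0 < Q) (hJ : 0 < J) (x₀ x₁ : ℝ) {R : ℝ} (hR : 0 ≤ R) :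
    (((gridIndex Q J).filter fun d =>
        |(gridPt Q J d).1 - x₀| ≤ R ∧ |(gridPt Q J d).2 - x₁| ≤ R).card : ℝ) ≤
      (2 * R * (Q * J) + 1) ^ 2 := by
  have hγ : (0 : ℝ) < Q * mesh Q J := mul_pos (by exact_mod_cast hQ) (mesh_pos hQ hJ)
  have h2R : 2 * R / (Q * mesh Q J) = 2 * R * (Q * J) := by
    rw [div_eq_iff hγ.ne']; linear_combination (-2 * R) * mesh_mul hQ hJ
  have hline : ∀ x : ℝ, (((Finset.Ico 0 (Q * J)).filter fun a : ℤ =>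
      |((a * Q : ℤ) : ℝ) * mesh Q J - x| ≤ R).card : ℝ) ≤ 2 * R * (Q * J) + 1 := fun x =>
    h2R ▸ card_filter_abs_le _ (-x) hγ hR fun a => by push_cast; ring
  have hprod : ((gridIndex Q J).filter fun d =>
      |(gridPt Q J d).1 - x₀| ≤ R ∧ |(gridPt Q J d).2 - x₁| ≤ R) =
      (Finset.Ico 0 (Q * J)).filter (fun a : ℤ => |((a * Q : ℤ) : ℝ) * mesh Q J - x₀| ≤ R) ×ˢ
        (Finset.Ico 0 (Q * J)).filter (fun b : ℤ => |((b * Q : ℤ) : ℝ) * mesh Q J - x₁| ≤ R) := by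
    rw [← Finset.filter_product]; rfl
  rw [hprod, Finset.card_product, Nat.cast_mul, sq]
  exact mul_le_mul (hline x₀) (hline x₁) (Nat.cast_nonneg _) (by positivity)

lemma card_filter_trackIndex_le (hQ : 0 < Q) (hJ : 0 < J) (x₀ x₁ : ℝ) {R : ℝ} (hR : 0 ≤ R) :
    (((trackIndex Q J).filter fun d =>
        |(trackPt Q J d).1 - x₀| ≤ R ∧ |(trackPt Q J d).2 - x₁| ≤ R).card : ℝ) ≤
      (2 * R / mesh Q J + 1) * (16 * J * R + 1) := by
  have hδ := mesh_pos hQ hJ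
  have hJ' : (0 : ℝ) < J := by exact_mod_cast hJ
  have hK : (0 : ℝ) < Q * J := by positivity
  calc _ ≤ (((Finset.Ico 0 (Q ^ 2 * J)).filter fun X : ℤ => |X * mesh Q J - x₀| ≤ R).card : ℝ) *
        (16 * J * R + 1) :=
      card_filter_product_le _ _ _ (fun X j => |(trackPt Q J (X, j)).2 - x₁| ≤ R) fun X _ _ => by
        -- in a fixed column the rows are at least `1 / (8 * J)` apart
        have he : (0 : ℝ) ≤ ((X % (Q * J) : ℤ) : ℝ) := by
          exact_mod_cast Int.emod_nonneg X (mul_pos hQ hJ).ne'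
        set e : ℝ := ((X % (Q * J) : ℤ) : ℝ)
        have hγ : (8 * J : ℝ)⁻¹ ≤ (8 * J : ℝ)⁻¹ + Q / (Q * J) * e * mesh Q J :=
          le_add_of_nonneg_right (by positivity)
        refine (card_filter_abs_le _ (1 / 2 + ((X / (Q * J) : ℤ) : ℝ) / (Q * J) * e * mesh Q J - x₁)
          (lt_of_lt_of_le (by positivity) hγ) hR fun j => ?_).trans ?_
        · simp only [trackPt, trackSlope, e]; push_cast; ring
        · have : 2 * R / (8 * J : ℝ)⁻¹ = 16 * J * R := by field_simp; ring
          gcongr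
          exact this ▸ div_le_div_of_nonneg_left (by positivity) (by positivity) hγ
    _ ≤ (2 * R / mesh Q J + 1) * (16 * J * R + 1) := by
      gcongr
      exact card_filter_abs_le _ (-x₀) hδ hR fun X => by ring

lemma ncard_hits_trainTracks_le (hQ : 0 < Q) (hJ : 0 < J) {r : ℝ} (hr : mesh Q J ≤ r)
    (x : EuclideanSpace ℝ (Fin 2)) :
    ((hits (mesh Q J) (trainTracks Q J) x r).ncard : ℝ) ≤
      352 * (r * (Q * J)) ^ 2 + 12 * (r / mesh Q J) := by
  have hδ := mesh_pos hQ hJ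
  have hr₀ : 0 ≤ 2 * r := by linarith
  have hunion : (hits (mesh Q J) (trainTracks Q J) x r).ncard ≤
      (hits (mesh Q J) ((gridIndex Q J).image fun d => cell (mesh Q J) (gridPt Q J d)) x r).ncard +
      (hits (mesh Q J) ((trackIndex Q J).image fun d => cell (mesh Q J) (trackPt Q J d))
        x r).ncard +
      (hits (mesh Q J) ((trackIndex Q J).image fun d => cell (mesh Q J) (trackPt Q J d).swap)
        x r).ncard := by
    rw [trainTracks, hits_union, hits_union]
    exact (Set.ncard_union_le _ _).trans (add_le_add (Set.ncard_union_le _ _) le_rfl)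
  have hswap : ((trackIndex Q J).filter fun d =>
      |(trackPt Q J d).swap.1 - x 0| ≤ 2 * r ∧ |(trackPt Q J d).swap.2 - x 1| ≤ 2 * r) =
      (trackIndex Q J).filter fun d =>
        |(trackPt Q J d).1 - x 1| ≤ 2 * r ∧ |(trackPt Q J d).2 - x 0| ≤ 2 * r :=
    Finset.filter_congr fun _ _ => and_comm
  have h₁ := card_filter_gridIndex_le hQ hJ (x 0) (x 1) hr₀
  have h₂ := card_filter_trackIndex_le hQ hJ (x 0) (x 1) hr₀
  have h₃ := card_filter_trackIndex_le hQ hJ (x 1) (x 0) hr₀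
  have c₁ := ncard_hits_image_cell_le hδ hr (gridIndex Q J) (gridPt Q J) x
  have c₂ := ncard_hits_image_cell_le hδ hr (trackIndex Q J) (trackPt Q J) x
  have c₃ := ncard_hits_image_cell_le hδ hr (trackIndex Q J) (fun d => (trackPt Q J d).swap) x
  rw [hswap] at c₃
  have hcount : ((hits (mesh Q J) (trainTracks Q J) x r).ncard : ℝ) ≤
      (2 * (2 * r) * (Q * J) + 1) ^ 2 +
        2 * ((2 * (2 * r) / mesh Q J + 1) * (16 * J * (2 * r) + 1)) := by
    have := (Nat.cast_le (α := ℝ)).mpr (hunion.trans (add_le_add (add_le_add c₁ c₂) c₃))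
    push_cast at this
    linarith
  have hKδ : (J : ℝ) / mesh Q J = (Q * J) ^ 2 := by
    rw [div_eq_iff hδ.ne']; linear_combination (-(J : ℝ)) * mesh_mul hQ hJ
  have hρ : 1 ≤ r / mesh Q J := (one_le_div hδ).mpr hr
  have hgrid : (2 * (2 * r) * (Q * J) + 1) ^ 2 ≤ 32 * (r * (Q * J)) ^ 2 + 2 := by
    nlinarith [sq_nonneg (4 * r * (Q * J) - 1)]
  have htrack : (2 * (2 * r) / mesh Q J + 1) * (16 * J * (2 * r) + 1) ≤
      160 * (r * (Q * J)) ^ 2 + 5 * (r / mesh Q J) := by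
    have hJ' : (0 : ℝ) ≤ J := by exact_mod_cast hJ.le
    have hρ' : 2 * (2 * r) / mesh Q J + 1 ≤ 5 * (r / mesh Q J) := by
      rw [show 2 * (2 * r) / mesh Q J = 4 * (r / mesh Q J) by ring]; linarith
    calc _ ≤ 5 * (r / mesh Q J) * (16 * J * (2 * r) + 1) :=
          mul_le_mul_of_nonneg_right hρ' (by positivity)
      _ = 160 * r ^ 2 * (J / mesh Q J) + 5 * (r / mesh Q J) := by ring
      _ = 160 * (r * (Q * J)) ^ 2 + 5 * (r / mesh Q J) := by rw [hKδ]; ring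
  linarith

lemma track_subset (hQ : 0 < Q) (hJ : 0 < J) {i : ℤ} (hi : |i| ≤ Q * J) :
    track Q J i ⊆ trackIndex Q J := by
  intro d hd
  obtain ⟨ℓ, hℓ, rfl⟩ := Finset.mem_image.mp hd
  obtain ⟨hℓ₀, hℓ₁⟩ := Finset.mem_Ico.mp hℓ
  obtain ⟨hi₀, hi₁⟩ := abs_le.mp hi
  have ha₀ : 0 ≤ i % Q := Int.emod_nonneg i hQ.ne'
  have ha₁ : i % Q < Q := Int.emod_lt_of_pos i hQ
  refine Finset.mem_product.mpr ⟨Finset.mem_Ico.mpr ⟨by positivity, by nlinarith⟩,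
    Finset.mem_Icc.mpr ⟨?_, ?_⟩⟩
  · exact (Int.le_ediv_iff_mul_le hQ).mpr (by linarith)
  · exact (Int.ediv_le_iff_le_mul hQ).mpr (by linarith)

lemma le_card_image_track (hQ : 0 < Q) (hJ : 0 < J) (i : ℤ) {g : ℤ × ℤ → ℤ × ℤ}
    (hg : ∀ d ∈ track Q J i, ∀ d' ∈ track Q J i, g d = g d' → d.1 = d'.1) :
    ((Q * J : ℤ) : ℝ) ≤ ((track Q J i).image g).card := by
  have hinj : Set.InjOn g (track Q J i) := fun d hd d' hd' hdd' => by
    obtain ⟨ℓ, -, rfl⟩ := Finset.mem_image.mp hd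
    obtain ⟨ℓ', -, rfl⟩ := Finset.mem_image.mp hd'
    exact Prod.ext (hg _ hd _ hd' hdd') rfl
  rw [Finset.card_image_of_injOn hinj, track, Finset.card_image_of_injective _
    fun ℓ ℓ' h => by simpa using congrArg Prod.fst h, Int.card_Ico, sub_zero,
    ← Int.cast_natCast, Int.toNat_of_nonneg (mul_pos hQ hJ).le]

lemma exists_near_line_of_track (hQ : 0 < Q) (hJ : 0 < J) {i : ℤ} {u v : ℝ}
    (hi : |i * u - (Q * J : ℤ) * v| ≤ 1 / 2) :
    ∃ c : ℝ, ∀ d ∈ track Q J i,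
      |(trackPt Q J d).2 * u - (trackPt Q J d).1 * v - c| ≤ mesh Q J / 2 := by
  have hδ := mesh_pos hQ hJ
  have hK : 0 < Q * J := mul_pos hQ hJ
  have hK' : (0 : ℝ) < Q * J := by exact_mod_cast hK
  refine ⟨(1 / 2 + ((i / Q : ℤ) : ℝ) / (8 * J)) * u - ((i % Q * (Q * J) : ℤ) : ℝ) * mesh Q J * v,
    fun d hd => ?_⟩
  obtain ⟨ℓ, hℓ, rfl⟩ := Finset.mem_image.mp hd
  obtain ⟨hℓ₀, hℓ₁⟩ := Finset.mem_Ico.mp hℓ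
  have hcol : (i % Q * (Q * J) + ℓ) / (Q * J) = i % Q := by
    rw [add_comm, Int.add_mul_ediv_right _ _ hK.ne', Int.ediv_eq_zero_of_lt hℓ₀ hℓ₁, zero_add]
  have hpos : (i % Q * (Q * J) + ℓ) % (Q * J) = ℓ := by
    rw [add_comm, Int.add_mul_emod_self_right, Int.emod_eq_of_lt hℓ₀ hℓ₁]
  have hslope : trackSlope Q J (i % Q * (Q * J) + ℓ) (i / Q) = i := by
    rw [trackSlope, hcol, Int.mul_ediv_add_emod]
  have hℓ' : (0 : ℝ) ≤ ℓ ∧ (ℓ : ℝ) ≤ Q * J := ⟨by exact_mod_cast hℓ₀, by exact_mod_cast hℓ₁.le⟩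
  have key : (trackPt Q J (i % Q * (Q * J) + ℓ, i / Q)).2 * u -
      (trackPt Q J (i % Q * (Q * J) + ℓ, i / Q)).1 * v -
      ((1 / 2 + ((i / Q : ℤ) : ℝ) / (8 * J)) * u - ((i % Q * (Q * J) : ℤ) : ℝ) * mesh Q J * v) =
      (ℓ / (Q * J) * mesh Q J) * (i * u - (Q * J : ℤ) * v) := by
    simp only [trackPt, hslope, hpos]
    push_cast
    field_simp
    ring
  rw [key, abs_mul, abs_of_nonneg (by positivity)]
  calc ℓ / (Q * J) * mesh Q J * |i * u - (Q * J : ℤ) * v| ≤ 1 * mesh Q J * (1 / 2) := by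
        gcongr
        exact (div_le_one hK').mpr hℓ'.2
    _ = mesh Q J / 2 := by ring

lemma exists_tube (hQ : 16 ≤ Q) (hJ : 0 < J) {θ : EuclideanSpace ℝ (Fin 2)} (hθ : ‖θ‖ = 1) :
    ∃ (α β : ℝ) (S : Finset (ℤ × ℤ)), S ⊆ trainTracks Q J ∧ β - α ≤ 5 * mesh Q J ∧
      ((Q * J : ℤ) : ℝ) ≤ S.card ∧
      ∀ q ∈ S, ∀ z ∈ dsq (mesh Q J) q.1 q.2, proj θ z ∈ Icc α β := by
  have hQ₀ : 0 < Q := by linarith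
  have hδ := mesh_pos hQ₀ hJ
  have hK : 0 ≤ Q * J := (mul_pos hQ₀ hJ).le
  have hθ₀ := abs_apply_le_one hθ 0
  have hθ₁ := abs_apply_le_one hθ 1
  have hfst : ∀ d : ℤ × ℤ, (cell (mesh Q J) (trackPt Q J d)).1 = d.1 := fun d =>
    cell_fst_intCast_mul hδ.ne' d.1 _
  rcases le_total |θ 1| |θ 0| with hslope | hslope
  · obtain ⟨i, hi, hiθ⟩ := exists_int_abs_mul_sub_le hθ₀ hslope hK
    obtain ⟨c, hc⟩ := exists_near_line_of_track hQ₀ hJ hiθ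
    refine ⟨c - (mesh Q J / 2 + 2 * mesh Q J), c + (mesh Q J / 2 + 2 * mesh Q J),
      (track Q J i).image fun d => cell (mesh Q J) (trackPt Q J d), ?_, by linarith,
      le_card_image_track hQ₀ hJ i fun d _ d' _ h => by simpa [hfst] using congrArg Prod.fst h,
      ?_⟩
    · exact (Finset.image_subset_image (track_subset hQ₀ hJ hi)).trans
        (Finset.subset_union_right.trans Finset.subset_union_left)
    · rintro q hq z hz
      obtain ⟨d, hd, rfl⟩ := Finset.mem_image.mp hq
      exact proj_mem_Icc_of_mem_dsq_cell hδ hθ₀ hθ₁ (hc d hd) hz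
  · obtain ⟨i, hi, hiθ⟩ := exists_int_abs_mul_sub_le hθ₁ hslope hK
    obtain ⟨c, hc⟩ := exists_near_line_of_track hQ₀ hJ hiθ
    refine ⟨-c - (mesh Q J / 2 + 2 * mesh Q J), -c + (mesh Q J / 2 + 2 * mesh Q J),
      (track Q J i).image fun d => cell (mesh Q J) (trackPt Q J d).swap, ?_, by linarith,
      le_card_image_track hQ₀ hJ i fun d _ d' _ h => by
        simpa [cell_swap, hfst] using congrArg Prod.snd h, ?_⟩
    · exact (Finset.image_subset_image (track_subset hQ₀ hJ hi)).trans Finset.subset_union_right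
    · rintro q hq z hz
      obtain ⟨d, hd, rfl⟩ := Finset.mem_image.mp hq
      refine proj_mem_Icc_of_mem_dsq_cell hδ hθ₀ hθ₁ ?_ hz
      rw [← abs_neg]
      convert hc d hd using 2
      simp only [Prod.fst_swap, Prod.snd_swap]
      ring

end

end TrainTrack

def IsTubeRichTSet (c C t δ : ℝ) (P : Finset (ℤ × ℤ)) : Prop :=
  (∀ q ∈ P, dsq δ q.1 q.2 ⊆ unitSq) ∧
  c * δ ^ (-t) ≤ P.card ∧
  (∀ (x : EuclideanSpace ℝ (Fin 2)) (r : ℝ), δ ≤ r → r ≤ 1 →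
    ((hits δ P x r).ncard : ℝ) ≤ C * (r / δ) ^ t) ∧
  (∀ θ : EuclideanSpace ℝ (Fin 2), ‖θ‖ = 1 →
    ∃ (α β : ℝ) (S : Finset (ℤ × ℤ)), S ⊆ P ∧ β - α ≤ C * δ ∧ c * δ ^ (-t / 2) ≤ S.card ∧
      ∀ q ∈ S, ∀ z ∈ dsq δ q.1 q.2, proj θ z ∈ Icc α β)

lemma mul_rpow_neg_half_le {c δ t M : ℝ} (hc₀ : 0 ≤ c) (hc₁ : c ≤ 1) (hδ : 0 < δ) (hM : 0 ≤ M)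
    (h : c * δ ^ (-t) ≤ M ^ 2) : c * δ ^ (-t / 2) ≤ M := by
  have hsq : (δ ^ (-t / 2)) ^ 2 = δ ^ (-t) := by
    rw [← Real.rpow_natCast, ← Real.rpow_mul hδ.le]; norm_num
  refine (pow_le_pow_iff_left₀ (by positivity) hM two_ne_zero).mp ?_
  calc (c * δ ^ (-t / 2)) ^ 2 = c * (c * δ ^ (-t)) := by rw [mul_pow, hsq]; ring
    _ ≤ 1 * M ^ 2 := mul_le_mul hc₁ h (by positivity) zero_le_one
    _ = M ^ 2 := one_mul _

lemma isTubeRichTSet_singleton {c C t δ : ℝ} (hc₀ : 0 ≤ c) (hc₁ : c ≤ 1) (hC : 4 ≤ C) (ht : 0 ≤ t)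
    (hδ : 0 < δ) (hδ₁ : δ ≤ 1) (hcδ : c * δ ^ (-t) ≤ 1) : IsTubeRichTSet c C t δ {(0, 0)} := by
  have hcell : cell δ (0, 0) = (0, 0) := by simp [cell]
  refine ⟨?_, by simpa using hcδ, fun x r hr _ => ?_, fun θ hθ => ?_⟩
  · intro q hq z hz
    obtain rfl := Finset.mem_singleton.mp hq
    obtain ⟨⟨h₁, h₂⟩, h₃, h₄⟩ := hz
    simp only [Int.cast_zero, zero_mul, zero_add, one_mul] at h₁ h₂ h₃ h₄
    exact ⟨⟨h₁, h₂.trans hδ₁⟩, h₃, h₄.trans hδ₁⟩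
  · have h₁ : (1 : ℝ) ≤ (r / δ) ^ t := Real.one_le_rpow ((one_le_div hδ).mpr hr) ht
    have h₂ : ((hits δ {(0, 0)} x r).ncard : ℝ) ≤ 1 := by
      exact_mod_cast (ncard_hits_le_card _ x).trans (Finset.card_singleton _).le
    nlinarith
  · refine ⟨0 - (0 + 2 * δ), 0 + (0 + 2 * δ), {(0, 0)}, subset_rfl, by nlinarith,
      by simpa using mul_rpow_neg_half_le hc₀ hc₁ hδ zero_le_one (by simpa using hcδ), ?_⟩
    intro q hq z hz
    obtain rfl := Finset.mem_singleton.mp hq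
    rw [← hcell] at hz
    exact proj_mem_Icc_of_mem_dsq_cell hδ (abs_apply_le_one hθ 0) (abs_apply_le_one hθ 1)
      (by simp) hz

lemma sq_mul_le_rpow {r δ K t : ℝ} (hδ : 0 ≤ δ) (hr₀ : 0 < r) (hr₁ : r ≤ 1) (ht : t ≤ 2)
    (hK : K ^ 2 ≤ 4 * δ ^ (-t)) : (r * K) ^ 2 ≤ 4 * (r / δ) ^ t := by
  have hr2 : r ^ 2 ≤ r ^ t := by
    rw [← Real.rpow_natCast]
    exact Real.rpow_le_rpow_of_exponent_ge hr₀ hr₁ (by norm_num; linarith)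
  calc (r * K) ^ 2 = r ^ 2 * K ^ 2 := mul_pow _ _ _
    _ ≤ r ^ t * (4 * δ ^ (-t)) := mul_le_mul hr2 hK (sq_nonneg _) (by positivity)
    _ = 4 * (r / δ) ^ t := by
      rw [Real.div_rpow hr₀.le hδ, Real.rpow_neg hδ]; ring

namespace TrainTrack

lemma isTubeRichTSet {Q J : ℤ} (hQ : 16 ≤ Q) (hJ : 0 < J) {c t : ℝ} (hc₀ : 0 ≤ c) (hc₁ : c ≤ 1)
    (ht₁ : 1 ≤ t) (ht₂ : t ≤ 2) (hcard : c * mesh Q J ^ (-t) ≤ ((Q * J : ℤ) : ℝ) ^ 2)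
    (hK : ((Q * J : ℤ) : ℝ) ^ 2 ≤ 4 * mesh Q J ^ (-t)) :
    IsTubeRichTSet c 1420 t (mesh Q J) (trainTracks Q J) := by
  have hQ₀ : 0 < Q := by linarith
  have hδ := mesh_pos hQ₀ hJ
  refine ⟨trainTracks_subset_unitSq hQ hJ, hcard.trans (card_trainTracks hQ₀ hJ),
    fun x r hr hr₁ => ?_, fun θ hθ => ?_⟩
  · have hρ : r / mesh Q J ≤ (r / mesh Q J) ^ t := by
      conv_lhs => rw [← Real.rpow_one (r / mesh Q J)]
      exact Real.rpow_le_rpow_of_exponent_le ((one_le_div hδ).mpr hr) ht₁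
    have := sq_mul_le_rpow hδ.le (hδ.trans_le hr) hr₁ ht₂ hK
    push_cast at this
    linarith [ncard_hits_trainTracks_le hQ₀ hJ hr x]
  · obtain ⟨α, β, S, hSP, hαβ, hS, hSθ⟩ := exists_tube hQ hJ hθ
    exact ⟨α, β, S, hSP, by linarith, (mul_rpow_neg_half_le hc₀ hc₁ hδ
      (by exact_mod_cast (mul_pos hQ₀ hJ).le) hcard).trans hS, hSθ⟩

end TrainTrack

lemma exists_scales {N : ℕ} {t : ℝ} (hN : 8 ≤ N) (ht₁ : 1 ≤ t) (ht₂ : t ≤ 2) :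
    ∃ k l : ℕ, 4 ≤ k ∧ N = 2 * k + l ∧
      (2 ^ 14)⁻¹ * (2 : ℝ) ^ ((N : ℝ) * t) ≤ ((2 : ℝ) ^ (k + l)) ^ 2 ∧
      ((2 : ℝ) ^ (k + l)) ^ 2 ≤ 4 * (2 : ℝ) ^ ((N : ℝ) * t) := by
  -- `k ≈ N (1 - t / 2)` makes `2 ^ (k + l) = 2 ^ (N - k) ≈ 2 ^ (N t / 2) = δ ^ (-t / 2)`
  set x : ℝ := N * (1 - t / 2) with hx
  have hN' : (8 : ℝ) ≤ N := by exact_mod_cast hN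
  have hx₀ : 0 ≤ x := mul_nonneg (by positivity) (by linarith)
  have hxN : 2 * x ≤ N := by nlinarith
  set k := max 4 ⌊x⌋₊
  have hk_lo : x - 1 < k := by
    have : (⌊x⌋₊ : ℝ) ≤ k := by exact_mod_cast le_max_right 4 ⌊x⌋₊
    linarith [Nat.lt_floor_add_one x]
  have hk : (k : ℝ) = 4 ∨ (k : ℝ) ≤ x := by
    rcases max_choice 4 ⌊x⌋₊ with h | h <;> simp only [k, h]
    · exact Or.inl (by norm_num)
    · exact Or.inr (Nat.floor_le hx₀)
  have hk_hi : (k : ℝ) ≤ x + 4 := by rcases hk with h | h <;> linarith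
  have h2k : 2 * k ≤ N := by
    have : (2 * k : ℝ) ≤ N := by rcases hk with h | h <;> linarith
    exact_mod_cast this
  obtain ⟨l, hl⟩ := Nat.exists_eq_add_of_le h2k
  have hl' : (N : ℝ) = 2 * k + l := by exact_mod_cast hl
  have hpow : ((2 : ℝ) ^ (k + l)) ^ 2 = (2 : ℝ) ^ (2 * ((k : ℝ) + l)) := by
    rw [← pow_mul, ← Real.rpow_natCast]; push_cast; ring_nf
  have h2 : ∀ a b : ℝ, a ≤ b → (2 : ℝ) ^ a ≤ 2 ^ b := fun a b h =>
    Real.rpow_le_rpow_of_exponent_le one_le_two h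
  refine ⟨k, l, le_max_left _ _, hl, ?_, ?_⟩ <;> rw [hpow]
  · rw [inv_mul_le_iff₀ (by positivity)]
    calc (2 : ℝ) ^ ((N : ℝ) * t) ≤ 2 ^ ((14 : ℝ) + 2 * (k + l)) := h2 _ _ (by nlinarith)
      _ = 2 ^ 14 * 2 ^ (2 * ((k : ℝ) + l)) := by rw [Real.rpow_add two_pos]; norm_num
  · calc (2 : ℝ) ^ (2 * ((k : ℝ) + l)) ≤ 2 ^ ((2 : ℝ) + N * t) := h2 _ _ (by nlinarith)
      _ = 4 * 2 ^ ((N : ℝ) * t) := by rw [Real.rpow_add two_pos]; norm_num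

theorem stmt_4 :
    ∃ c C : ℝ, 0 < c ∧ 0 < C ∧
    ∀ (t : ℝ), t ∈ Set.Ico (1:ℝ) 2 → ∀ (N : ℕ),
    ∃ P : Finset (ℤ × ℤ),
      (∀ q ∈ P, dsq ((2:ℝ)^(-(N:ℝ))) q.1 q.2 ⊆ unitSq) ∧
      c * ((2:ℝ)^(-(N:ℝ)))^(-t) ≤ P.card ∧
      (∀ (x : EuclideanSpace ℝ (Fin 2)) (r : ℝ), (2:ℝ)^(-(N:ℝ)) ≤ r → r ≤ 1 →
        ({q : ℤ × ℤ | q ∈ P ∧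
            (dsq ((2:ℝ)^(-(N:ℝ))) q.1 q.2 ∩ Metric.closedBall x r).Nonempty}.ncard : ℝ)
          ≤ C * (r / (2:ℝ)^(-(N:ℝ)))^t) ∧
      (∀ θ : EuclideanSpace ℝ (Fin 2), ‖θ‖ = 1 →
        ∃ (α β : ℝ) (S : Finset (ℤ × ℤ)), S ⊆ P ∧
          β - α ≤ C * (2:ℝ)^(-(N:ℝ)) ∧
          c * ((2:ℝ)^(-(N:ℝ)))^(-t/2) ≤ S.card ∧
          ∀ q ∈ S, ∀ z ∈ dsq ((2:ℝ)^(-(N:ℝ))) q.1 q.2, proj θ z ∈ Set.Icc α β) := by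
  refine ⟨(2 ^ 14)⁻¹, 1420, by norm_num, by norm_num, fun t ⟨ht₁, ht₂⟩ N => ?_⟩
  have hpow : ((2 : ℝ) ^ (-(N : ℝ))) ^ (-t) = (2 : ℝ) ^ ((N : ℝ) * t) := by
    rw [← Real.rpow_mul zero_le_two]; ring_nf
  rcases lt_or_ge N 8 with hN | hN
  · have hNt : (N : ℝ) * t ≤ 14 := by
      have : (N : ℝ) ≤ 7 := by exact_mod_cast Nat.le_of_lt_succ hN
      nlinarith
    refine ⟨{(0, 0)}, isTubeRichTSet_singleton (by norm_num) (by norm_num) (by norm_num)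
      (by linarith) (by positivity) (Real.rpow_le_one_of_one_le_of_nonpos one_le_two (by simp)) ?_⟩
    rw [hpow, inv_mul_le_iff₀ (by positivity), mul_one]
    simpa using Real.rpow_le_rpow_of_exponent_le one_le_two hNt
  · obtain ⟨k, l, hk, rfl, hlo, hhi⟩ := exists_scales hN ht₁ ht₂.le
    have hmesh : (2 : ℝ) ^ (-((2 * k + l : ℕ) : ℝ)) = TrainTrack.mesh (2 ^ k) (2 ^ l) := by
      rw [Real.rpow_neg zero_le_two, Real.rpow_natCast, TrainTrack.mesh]; push_cast; ring
    have hK : (((2 : ℤ) ^ k * 2 ^ l : ℤ) : ℝ) = 2 ^ (k + l) := by push_cast; ring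
    rw [hmesh] at hpow ⊢
    exact ⟨_, TrainTrack.isTubeRichTSet ((pow_le_pow_right₀ one_le_two hk).trans' (by norm_num))
      (by positivity) (by norm_num) (by norm_num) ht₁ ht₂.le (by rwa [hpow, hK])
      (by rwa [hpow, hK])⟩
end

section
/- Let t ∈ [1,2), let u, v satisfy t < u < v < 2, and let p > 2/(2-v). Let {δₙ} ⊂ (0,1] be a sequence with (δ₀⋯δ_{n-1})² ≥ δₙ^{(v-u)/2} for all n ≥ 1. Suppose μ is a Borel probability measure on [0,1]² such that for every n and every θ ∈ S¹ there is an interval J_θ,ₙ ⊂ ℝ with |J_θ,ₙ| ≤ C δₙ and (πθ μ)(J_θ,ₙ) ≥ c (δ₀⋯δ_{n-1})² δₙ^{u/2}. Then for every θ ∈ S¹, πθ μ does not have a density in L^p(ℝ). -/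
/-!
If the projection had a density `f ∈ Lᵖ`, Hölder's inequality would bound the mass of an
interval of length `ℓ` by `‖f‖ₚ ℓ^(1 - 1/p)`. Since `(δ₀⋯δₙ₋₁)² ≥ δₙ^((v-u)/2)`, the
hypotheses force intervals of length `≲ δₙ` to carry mass `≳ δₙ^(v/2)`, and
`v/2 < 1 - 1/p` exactly when `p > 2/(2-v)`; letting `δₙ → 0` gives a contradiction.
-/

open MeasureTheory Metric Set Filter

theorem one_lt_and_half_lt_one_sub_inv_of_two_div_sub_lt {v p : ℝ} (hv0 : 0 < v) (hv : v < 2)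
    (hp : 2 / (2 - v) < p) : 1 < p ∧ v / 2 < 1 - 1 / p := by
  have hv2 : 0 < 2 - v := by linarith
  have hp1 : 1 < p := lt_trans ((one_lt_div hv2).mpr (by linarith)) hp
  refine ⟨hp1, ?_⟩
  have h2p : 2 < p * (2 - v) := (div_lt_iff₀ hv2).mp hp
  have h1p : 2 / p < 2 - v := (div_lt_iff₀' (by linarith)).mpr h2p
  have : 2 / p = 2 * (1 / p) := by ring
  linarith

theorem setLIntegral_ofReal_le_eLpNorm_mul_measure_rpow {α : Type*} [MeasurableSpace α]
    {μ : Measure α} {f : α → ℝ} {p : ENNReal} (hp : 1 ≤ p) (hf : AEStronglyMeasurable f μ)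
    (s : Set α) :
    ∫⁻ x in s, ENNReal.ofReal (f x) ∂μ ≤ eLpNorm f p μ * μ s ^ (1 - 1 / p.toReal) :=
  calc ∫⁻ x in s, ENNReal.ofReal (f x) ∂μ
      ≤ ∫⁻ x in s, ‖f x‖ₑ ∂μ := lintegral_mono fun x => Real.ofReal_le_enorm (f x)
    _ = eLpNorm f 1 (μ.restrict s) := eLpNorm_one_eq_lintegral_enorm.symm
    _ ≤ eLpNorm f p (μ.restrict s) *
          μ.restrict s univ ^ (1 / (1 : ENNReal).toReal - 1 / p.toReal) :=
      eLpNorm_le_eLpNorm_mul_rpow_measure_univ hp hf.restrict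
    _ ≤ eLpNorm f p μ * μ s ^ (1 - 1 / p.toReal) := by
      rw [Measure.restrict_apply_univ, ENNReal.toReal_one, div_one]
      gcongr
      exact Measure.restrict_le_self

theorem withDensity_Icc_le_of_memLp {f : ℝ → ℝ} {p : ℝ} (hp : 1 ≤ p)
    (hf : MemLp f (ENNReal.ofReal p) volume) {x y ℓ : ℝ} (hℓ : 0 ≤ ℓ) (hxy : y - x ≤ ℓ) :
    volume.withDensity (fun s => ENNReal.ofReal (f s)) (Icc x y) ≤
      ENNReal.ofReal ((eLpNorm f (ENNReal.ofReal p) volume).toReal * ℓ ^ (1 - 1 / p)) := by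
  have hb : 0 ≤ 1 - 1 / p := by
    rw [sub_nonneg, div_le_one (by linarith)]
    exact hp
  rw [withDensity_apply _ measurableSet_Icc, ENNReal.ofReal_mul ENNReal.toReal_nonneg,
    ENNReal.ofReal_toReal hf.2.ne, ← ENNReal.ofReal_rpow_of_nonneg hℓ hb]
  calc ∫⁻ s in Icc x y, ENNReal.ofReal (f s)
      ≤ eLpNorm f (ENNReal.ofReal p) volume * volume (Icc x y) ^ (1 - 1 / p) := by
        simpa [ENNReal.toReal_ofReal (by linarith : 0 ≤ p)] using
          setLIntegral_ofReal_le_eLpNorm_mul_measure_rpow (ENNReal.one_le_ofReal.mpr hp)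
            hf.1 (Icc x y)
    _ ≤ eLpNorm f (ENNReal.ofReal p) volume * ENNReal.ofReal ℓ ^ (1 - 1 / p) := by
        rw [Real.volume_Icc]
        gcongr

theorem not_exists_memLp_density_of_concentrated {ν : Measure ℝ} {p a c C : ℝ} (hp : 1 ≤ p)
    (ha : a < 1 - 1 / p) (hc : 0 < c) (hC : 0 ≤ C) {ℓ : ℕ → ℝ} (hℓ : ∀ n, 0 < ℓ n)
    (hℓ0 : Tendsto ℓ atTop (nhds 0))
    (hconc : ∀ᶠ n in atTop, ∃ x y : ℝ, y - x ≤ C * ℓ n ∧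
      ENNReal.ofReal (c * ℓ n ^ a) ≤ ν (Icc x y)) :
    ¬ ∃ f : ℝ → ℝ, MemLp f (ENNReal.ofReal p) volume ∧
      ν = volume.withDensity (fun s => ENNReal.ofReal (f s)) := by
  rintro ⟨f, hf, rfl⟩
  set K := (eLpNorm f (ENNReal.ofReal p) volume).toReal
  set b := 1 - 1 / p
  have hbound : ∀ᶠ n in atTop, c ≤ K * C ^ b * ℓ n ^ (b - a) := by
    filter_upwards [hconc] with n ⟨x, y, hxy, hmass⟩
    have hℓn := hℓ n
    have hmass' := hmass.trans
      (withDensity_Icc_le_of_memLp hp hf (mul_nonneg hC hℓn.le) hxy)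
    rw [ENNReal.ofReal_le_ofReal_iff (by positivity), Real.mul_rpow hC hℓn.le] at hmass'
    have hsplit : ℓ n ^ b = ℓ n ^ (b - a) * ℓ n ^ a := by
      rw [← Real.rpow_add hℓn, sub_add_cancel]
    refine le_of_mul_le_mul_right ?_ (Real.rpow_pos_of_pos hℓn a)
    calc c * ℓ n ^ a ≤ K * (C ^ b * ℓ n ^ b) := hmass'
      _ = K * C ^ b * ℓ n ^ (b - a) * ℓ n ^ a := by rw [hsplit]; ring
  have hlim : Tendsto (fun n => K * C ^ b * ℓ n ^ (b - a)) atTop (nhds 0) := by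
    have := (hℓ0.rpow_const (Or.inr (sub_pos.mpr ha).le)).const_mul (K * C ^ b)
    rwa [Real.zero_rpow (sub_pos.mpr ha).ne', mul_zero] at this
  obtain ⟨n, hn, hlt⟩ := (hbound.and (hlim.eventually (gt_mem_nhds hc))).exists
  exact hn.not_gt hlt

theorem stmt_11_general (t u v p C c : ℝ) (ht : t ∈ Set.Ico (1:ℝ) 2)
    (htu : t < u) (huv : u < v) (hv : v < 2)
    (hp : 2 / (2 - v) < p) (hC : 0 < C) (hc : 0 < c)
    (δ : ℕ → ℝ) (hδ : ∀ n, δ n ∈ Set.Ioc (0:ℝ) 1)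
    (hδ0 : Filter.Tendsto δ Filter.atTop (nhds 0))
    (hprod : ∀ n : ℕ, 1 ≤ n → (δ n) ^ ((v - u)/2) ≤ (∏ i ∈ Finset.range n, δ i) ^ 2)
    (μ : Measure (EuclideanSpace ℝ (Fin 2)))
    (hJ : ∀ (n : ℕ) (θ : EuclideanSpace ℝ (Fin 2)), ‖θ‖ = 1 →
      ∃ x y : ℝ, y - x ≤ C * δ n ∧
        ENNReal.ofReal (c * (∏ i ∈ Finset.range n, δ i) ^ 2 * (δ n) ^ (u/2))
          ≤ (μ.map (proj θ)) (Set.Icc x y)) :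
    ∀ θ : EuclideanSpace ℝ (Fin 2), ‖θ‖ = 1 →
      ¬ ∃ f : ℝ → ℝ, MemLp f (ENNReal.ofReal p) volume ∧
          μ.map (proj θ) = volume.withDensity (fun s => ENNReal.ofReal (f s)) := by
  intro θ hθ
  obtain ⟨hp1, hvp⟩ := one_lt_and_half_lt_one_sub_inv_of_two_div_sub_lt
    (by linarith [ht.1] : 0 < v) hv hp
  refine not_exists_memLp_density_of_concentrated hp1.le hvp hc hC.le (fun n => (hδ n).1)
    hδ0 ?_
  filter_upwards [eventually_ge_atTop 1] with n hn
  obtain ⟨x, y, hxy, hmass⟩ := hJ n θ hθ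
  have hδn := (hδ n).1
  have hlower : c * δ n ^ (v / 2) ≤ c * (∏ i ∈ Finset.range n, δ i) ^ 2 * δ n ^ (u / 2) :=
    calc c * δ n ^ (v / 2) = c * δ n ^ ((v - u) / 2) * δ n ^ (u / 2) := by
          rw [mul_assoc, ← Real.rpow_add hδn]; ring_nf
      _ ≤ c * (∏ i ∈ Finset.range n, δ i) ^ 2 * δ n ^ (u / 2) := by
          gcongr
          exact hprod n hn
  exact ⟨x, y, hxy, (ENNReal.ofReal_le_ofReal hlower).trans hmass⟩

theorem stmt_11 (t u v p C c : ℝ) (ht : t ∈ Set.Ico (1:ℝ) 2)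
    (htu : t < u) (huv : u < v) (hv : v < 2)
    (hp : 2 / (2 - v) < p) (hC : 0 < C) (hc : 0 < c)
    (δ : ℕ → ℝ) (hδ : ∀ n, δ n ∈ Set.Ioc (0:ℝ) 1)
    (hδ0 : Filter.Tendsto δ Filter.atTop (nhds 0))
    (hprod : ∀ n : ℕ, 1 ≤ n → (δ n) ^ ((v - u)/2) ≤ (∏ i ∈ Finset.range n, δ i) ^ 2)
    (μ : Measure (EuclideanSpace ℝ (Fin 2))) [IsProbabilityMeasure μ]
    (hsupp : μ unitSqᶜ = 0)
    (hJ : ∀ (n : ℕ) (θ : EuclideanSpace ℝ (Fin 2)), ‖θ‖ = 1 →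
      ∃ x y : ℝ, y - x ≤ C * δ n ∧
        ENNReal.ofReal (c * (∏ i ∈ Finset.range n, δ i) ^ 2 * (δ n) ^ (u/2))
          ≤ (μ.map (proj θ)) (Set.Icc x y)) :
    ∀ θ : EuclideanSpace ℝ (Fin 2), ‖θ‖ = 1 →
      ¬ ∃ f : ℝ → ℝ, MemLp f (ENNReal.ofReal p) volume ∧
          μ.map (proj θ) = volume.withDensity (fun s => ENNReal.ofReal (f s)) :=
  stmt_11_general t u v p C c ht htu huv hv hp hC hc δ hδ hδ0 hprod μ hJ
end

section
/- Let B = B(c, R) ⊂ ℝ² be a disc and let b₁, …, b_k ∈ ∂B be points that are s-separated on ∂B. For each i, let L_i ⊂ [b_i, c] be a segment with endpoint b_i and length at most R/10. Then for any x ∈ ℝ² and r > 0 such that B(x, 3r) ∩ B(c, R/10) = ∅, the number of indices i with L_i ∩ B(x, 3r) ≠ ∅ is at most C·max{1, r/s} for an absolute constant C. -/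
open MeasureTheory Metric Set Filter

open Finset

lemma count_lemma {ι : Type*} [DecidableEq ι] (S : Finset ι) (f : ι → ℝ) (a L d : ℝ)
    (hd : 0 < d) (hL : 0 ≤ L)
    (hrange : ∀ i ∈ S, a ≤ f i ∧ f i ≤ a + L)
    (hsep : ∀ i ∈ S, ∀ j ∈ S, i ≠ j → d ≤ |f i - f j|) :
    (S.card : ℝ) ≤ L / d + 1 := by
  set φ : ι → ℤ := fun i => ⌊(f i - a) / d⌋ with hφ
  have hinj : Set.InjOn φ S := by
    intro i hi j hj hij
    by_contra hne
    have hs := hsep i hi j hj hne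
    have h1 : |(f i - a) / d - (f j - a) / d| < 1 := Int.abs_sub_lt_one_of_floor_eq_floor hij
    have : (f i - a) / d - (f j - a) / d = (f i - f j) / d := by ring
    rw [this, abs_div, abs_of_pos hd] at h1
    have := (div_lt_one hd).mp h1
    linarith
  have hcard : S.card = (S.image φ).card := (Finset.card_image_of_injOn hinj).symm
  have hsub : S.image φ ⊆ Finset.Icc 0 ⌊L / d⌋ := by
    intro n hn
    obtain ⟨i, hi, rfl⟩ := Finset.mem_image.mp hn
    obtain ⟨h1, h2⟩ := hrange i hi
    rw [Finset.mem_Icc]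
    constructor
    · exact Int.floor_nonneg.mpr (div_nonneg (by linarith) hd.le)
    · exact Int.floor_le_floor ((div_le_div_iff_of_pos_right hd).mpr (by linarith))
  have h3 : (S.image φ).card ≤ (Finset.Icc (0:ℤ) ⌊L / d⌋).card := Finset.card_le_card hsub
  have h4 : (Finset.Icc (0:ℤ) ⌊L / d⌋).card = (⌊L / d⌋ + 1).toNat := by
    rw [Int.card_Icc]; norm_num
  have h5 : (0:ℤ) ≤ ⌊L / d⌋ := Int.floor_nonneg.mpr (div_nonneg hL hd.le)
  have h6 : (((⌊L / d⌋ + 1).toNat : ℤ) : ℝ) ≤ L / d + 1 := by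
    rw [Int.toNat_of_nonneg (by omega)]
    push_cast
    have := Int.floor_le (L / d)
    linarith
  have h7 : S.card ≤ (⌊L / d⌋ + 1).toNat := by rw [hcard]; omega
  have : (S.card : ℝ) ≤ (((⌊L / d⌋ + 1).toNat : ℤ) : ℝ) := by exact_mod_cast h7
  linarith

lemma pair_ineq {fi fj gi gj d : ℝ} (hci : fi ^ 2 + gi ^ 2 = 1) (hcj : fj ^ 2 + gj ^ 2 = 1)
    (hfi : 1/2 ≤ fi) (hfj : 1/2 ≤ fj) (hd : 0 < d)
    (hs : d ^ 2 ≤ (fi - fj) ^ 2 + (gi - gj) ^ 2) : d / 2 ≤ |gi - gj| := by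
  have h0 : (fi - fj) * (fi + fj) = -((gi - gj) * (gi + gj)) := by
    linear_combination hci - hcj
  have h1 : ((fi - fj) * (fi + fj)) ^ 2 = ((gi - gj) * (gi + gj)) ^ 2 := by
    linear_combination ((fi - fj) * (fi + fj) - (gi - gj) * (gi + gj)) * h0
  have hsumf : 1 ≤ fi + fj := by linarith
  have hgs : (gi + gj) ^ 2 ≤ 3 := by nlinarith [sq_nonneg (gi - gj)]
  have e1 : (fi - fj) ^ 2 ≤ (fi - fj) ^ 2 * (fi + fj) ^ 2 := by
    nlinarith [mul_nonneg (sq_nonneg (fi - fj)) (show (0:ℝ) ≤ (fi + fj) ^ 2 - 1 by nlinarith)]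
  have e2 : (gi - gj) ^ 2 * (gi + gj) ^ 2 ≤ 3 * (gi - gj) ^ 2 := by
    nlinarith [mul_nonneg (sq_nonneg (gi - gj)) (show (0:ℝ) ≤ 3 - (gi + gj) ^ 2 by linarith)]
  have h3 : d ^ 2 ≤ 4 * (gi - gj) ^ 2 := by nlinarith [h1, e1, e2]
  by_contra hc
  push_neg at hc
  have hab := abs_nonneg (gi - gj)
  nlinarith [sq_abs (gi - gj)]

lemma arc_count {k : ℕ} (T : Finset (Fin k)) (f g : Fin k → ℝ) (a L d : ℝ)
    (hd : 0 < d) (hL : 0 ≤ L)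
    (hcirc : ∀ i ∈ T, f i ^ 2 + g i ^ 2 = 1)
    (hhalf : ∀ i ∈ T, 1/2 ≤ f i)
    (hrange : ∀ i ∈ T, a ≤ g i ∧ g i ≤ a + L)
    (hsep : ∀ i ∈ T, ∀ j ∈ T, i ≠ j → d ^ 2 ≤ (f i - f j) ^ 2 + (g i - g j) ^ 2) :
    (T.card : ℝ) ≤ 2 * L / d + 1 := by
  have key : ∀ i ∈ T, ∀ j ∈ T, i ≠ j → d / 2 ≤ |g i - g j| := fun i hi j hj hne =>
    pair_ineq (hcirc i hi) (hcirc j hj) (hhalf i hi) (hhalf j hj) hd (hsep i hi j hj hne)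
  have := count_lemma T g a L (d / 2) (by linarith) hL hrange key
  calc (T.card : ℝ) ≤ L / (d / 2) + 1 := this
    _ = 2 * L / d + 1 := by field_simp

section
variable {E : Type*} [NormedAddCommGroup E] [NormedSpace ℝ E]

lemma normalize_lip (u v : E) (m : ℝ) (hm : 0 < m) (hu : m ≤ ‖u‖) (hv : m ≤ ‖v‖) :
    ‖‖u‖⁻¹ • u - ‖v‖⁻¹ • v‖ ≤ 2 * ‖u - v‖ / m := by
  have hun : (0:ℝ) < ‖u‖ := lt_of_lt_of_le hm hu
  have hvn : (0:ℝ) < ‖v‖ := lt_of_lt_of_le hm hv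
  have key : ‖u‖⁻¹ • u - ‖v‖⁻¹ • v = ‖u‖⁻¹ • (u - v) + (‖u‖⁻¹ - ‖v‖⁻¹) • v := by
    rw [smul_sub, sub_smul]; abel
  rw [key]
  have h1 : ‖‖u‖⁻¹ • (u - v)‖ = ‖u - v‖ / ‖u‖ := by
    rw [norm_smul, Real.norm_eq_abs, abs_of_pos (by positivity)]; ring
  have h2 : ‖(‖u‖⁻¹ - ‖v‖⁻¹) • v‖ ≤ ‖u - v‖ / ‖u‖ := by
    rw [norm_smul, Real.norm_eq_abs]
    have he : ‖u‖⁻¹ - ‖v‖⁻¹ = (‖v‖ - ‖u‖) / (‖u‖ * ‖v‖) := by field_simp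
    rw [he, abs_div, abs_of_pos (mul_pos hun hvn)]
    have habs : |‖v‖ - ‖u‖| ≤ ‖u - v‖ := by
      rw [abs_sub_comm]; exact abs_norm_sub_norm_le u v
    rw [div_mul_eq_mul_div, div_le_div_iff₀ (by positivity) hun]
    nlinarith [mul_le_mul_of_nonneg_right (mul_le_mul_of_nonneg_right habs hvn.le) hun.le]
  have h4 : ‖u - v‖ / ‖u‖ ≤ ‖u - v‖ / m := by gcongr
  calc ‖‖u‖⁻¹ • (u - v) + (‖u‖⁻¹ - ‖v‖⁻¹) • v‖
      ≤ ‖‖u‖⁻¹ • (u - v)‖ + ‖(‖u‖⁻¹ - ‖v‖⁻¹) • v‖ := norm_add_le _ _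
    _ ≤ ‖u - v‖ / ‖u‖ + ‖u - v‖ / ‖u‖ := by rw [h1]; linarith
    _ ≤ 2 * ‖u - v‖ / m := by rw [two_mul, add_div]; exact add_le_add h4 h4

lemma dist_seg {p q : E} {y : E} (h : y ∈ segment ℝ p q) : dist y p ≤ dist q p := by
  obtain ⟨t1, t2, h1, h2, hsum, rfl⟩ := h
  have ht : t1 = 1 - t2 := by linarith
  subst ht
  rw [dist_eq_norm, dist_eq_norm]
  have he : (1 - t2) • p + t2 • q - p = t2 • (q - p) := by
    rw [sub_smul, one_smul, smul_sub]; abel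
  rw [he, norm_smul, Real.norm_eq_abs, abs_of_nonneg h2]
  nlinarith [norm_nonneg (q - p)]

lemma chord_bound (c : E) (R r : ℝ) (hR : 0 < R) (bi bj yi yj : E)
    (hbi : bi - c = (R * ‖yi - c‖⁻¹) • (yi - c))
    (hbj : bj - c = (R * ‖yj - c‖⁻¹) • (yj - c))
    (hyi : 9 * R / 10 ≤ ‖yi - c‖) (hyj : 9 * R / 10 ≤ ‖yj - c‖)
    (hdij : ‖yi - yj‖ ≤ 6 * r) :
    dist bi bj ≤ 14 * r := by
  have hm : (0:ℝ) < 9 * R / 10 := by linarith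
  have hsplit : bi - bj = R • (‖yi - c‖⁻¹ • (yi - c) - ‖yj - c‖⁻¹ • (yj - c)) := by
    have : bi - bj = (bi - c) - (bj - c) := by abel
    rw [this, hbi, hbj, mul_smul, mul_smul, ← smul_sub]
  have huv : (yi - c) - (yj - c) = yi - yj := by abel
  have hlip := normalize_lip (yi - c) (yj - c) (9 * R / 10) hm hyi hyj
  rw [huv] at hlip
  rw [dist_eq_norm, hsplit, norm_smul, Real.norm_eq_abs, abs_of_pos hR]
  have hr : (0:ℝ) ≤ 6 * r := le_trans (norm_nonneg _) hdij
  calc R * ‖‖yi - c‖⁻¹ • (yi - c) - ‖yj - c‖⁻¹ • (yj - c)‖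
      ≤ R * (2 * ‖yi - yj‖ / (9 * R / 10)) := by
        exact mul_le_mul_of_nonneg_left hlip hR.le
    _ ≤ R * (2 * (6 * r) / (9 * R / 10)) := by gcongr
    _ = 40 * r / 3 := by field_simp; ring
    _ ≤ 14 * r := by linarith

lemma dist_sq_coords (p q : EuclideanSpace ℝ (Fin 2)) :
    dist p q ^ 2 = (p 0 - q 0) ^ 2 + (p 1 - q 1) ^ 2 := by
  rw [EuclideanSpace.dist_eq, Real.sq_sqrt (by positivity)]
  simp [Fin.sum_univ_two, Real.dist_eq, sq_abs]

end

set_option maxHeartbeats 2000000 in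
theorem stmt_16 :
    ∃ C : ℝ, 0 < C ∧
    ∀ (c : EuclideanSpace ℝ (Fin 2)) (R s : ℝ) (k : ℕ)
      (b e : Fin k → EuclideanSpace ℝ (Fin 2)),
      0 < R → 0 < s →
      (∀ i, dist (b i) c = R) →
      (∀ i j, i ≠ j → s ≤ dist (b i) (b j)) →
      (∀ i, e i ∈ segment ℝ (b i) c) →
      (∀ i, dist (b i) (e i) ≤ R / 10) →
      ∀ (x : EuclideanSpace ℝ (Fin 2)) (r : ℝ), 0 < r →
        Metric.closedBall x (3 * r) ∩ Metric.closedBall c (R / 10) = ∅ →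
        ({i : Fin k |
            (segment ℝ (b i) (e i) ∩ Metric.closedBall x (3 * r)).Nonempty}.ncard : ℝ)
          ≤ C * max 1 (r / s) := by
  classical
  refine ⟨1000, by norm_num, ?_⟩
  intro c R s k b e hR hs hbc hbsep hseg hlen x r hr _hdisj
  have hR0 : R ≠ 0 := ne_of_gt hR
  have hs0 : s ≠ 0 := ne_of_gt hs
  have hmax1 : (1:ℝ) ≤ max 1 (r/s) := le_max_left _ _
  have hmaxr : r/s ≤ max 1 (r/s) := le_max_right _ _
  set S : Set (Fin k) :=
    {i | (segment ℝ (b i) (e i) ∩ Metric.closedBall x (3 * r)).Nonempty} with hSdef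
  have hfin : S.Finite := Set.toFinite S
  rw [Set.ncard_eq_toFinset_card' S]
  set T : Finset (Fin k) := S.toFinset with hTdef
  have hmemT : ∀ i, i ∈ T ↔ i ∈ S := fun i => Set.mem_toFinset
  -- choose points
  have hy : ∀ i ∈ S, ∃ p, p ∈ segment ℝ (b i) (e i) ∧ p ∈ Metric.closedBall x (3 * r) := by
    intro i hi
    obtain ⟨p, hp1, hp2⟩ := hi
    exact ⟨p, hp1, hp2⟩
  choose! y hy1 hy2 using hy
  -- basic estimates
  have hyb : ∀ i ∈ S, dist (y i) (b i) ≤ R / 10 := by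
    intro i hi
    have := dist_seg (hy1 i hi)
    calc dist (y i) (b i) ≤ dist (e i) (b i) := this
      _ = dist (b i) (e i) := dist_comm _ _
      _ ≤ R / 10 := hlen i
  have hyc : ∀ i ∈ S, 9 * R / 10 ≤ ‖y i - c‖ := by
    intro i hi
    have h1 : dist (b i) c ≤ dist (b i) (y i) + dist (y i) c := dist_triangle _ _ _
    have h2 : dist (b i) (y i) = dist (y i) (b i) := dist_comm _ _
    have h3 : dist (y i) c = ‖y i - c‖ := dist_eq_norm _ _
    have := hbc i
    have := hyb i hi
    linarith
  -- projection formula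
  have hproj : ∀ i ∈ S, b i - c = (R * ‖y i - c‖⁻¹) • (y i - c) := by
    intro i hi
    have hyseg : y i ∈ segment ℝ (b i) c :=
      (convex_segment (b i) c).segment_subset (left_mem_segment ℝ (b i) c) (hseg i) (hy1 i hi)
    obtain ⟨t1, t2, ht1, ht2, hsum, heq⟩ := hyseg
    have h1 : y i - c = t1 • (b i - c) := by
      rw [← heq]
      have ht : t2 = 1 - t1 := by linarith
      rw [ht, smul_sub, sub_smul, one_smul]
      abel
    have hn : ‖y i - c‖ = t1 * R := by
      rw [h1, norm_smul, Real.norm_eq_abs, abs_of_nonneg ht1, ← dist_eq_norm, hbc i]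
    have ht1pos : 0 < t1 := by
      have := hyc i hi
      nlinarith
    have ht10 : t1 ≠ 0 := ne_of_gt ht1pos
    rw [hn, h1, smul_smul, show R * (t1 * R)⁻¹ * t1 = 1 by field_simp <;> ring, one_smul]
  -- chord bound
  have hchord : ∀ i ∈ S, ∀ j ∈ S, dist (b i) (b j) ≤ 14 * r := by
    intro i hi j hj
    apply chord_bound c R r hR (b i) (b j) (y i) (y j) (hproj i hi) (hproj j hj)
      (hyc i hi) (hyc j hj)
    have h1 : dist (y i) x ≤ 3 * r := mem_closedBall.mp (hy2 i hi)
    have h2 : dist (y j) x ≤ 3 * r := mem_closedBall.mp (hy2 j hj)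
    have h3 : dist (y i) (y j) ≤ dist (y i) x + dist x (y j) := dist_triangle _ _ _
    have h4 : dist x (y j) = dist (y j) x := dist_comm _ _
    rw [← dist_eq_norm]
    linarith
  -- coordinates
  set P : Fin k → ℝ := fun i => (b i 0 - c 0) / R with hPdef
  set Q : Fin k → ℝ := fun i => (b i 1 - c 1) / R with hQdef
  have hPQ : ∀ i, P i ^ 2 + Q i ^ 2 = 1 := by
    intro i
    have h := dist_sq_coords (b i) c
    rw [hbc i] at h
    simp only [hPdef, hQdef]
    field_simp
    linarith
  have hkey : ∀ i j, (P i - P j) ^ 2 + (Q i - Q j) ^ 2 = dist (b i) (b j) ^ 2 / R ^ 2 := by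
    intro i j
    rw [dist_sq_coords]
    simp only [hPdef, hQdef]
    field_simp
    all_goals ring
  have hsepPQ : ∀ i j, i ≠ j → (s / R) ^ 2 ≤ (P i - P j) ^ 2 + (Q i - Q j) ^ 2 := by
    intro i j hne
    rw [hkey i j, div_pow]
    have hd := hbsep i j hne
    have hd2 : s ^ 2 ≤ dist (b i) (b j) ^ 2 := by nlinarith [dist_nonneg (x := b i) (y := b j)]
    gcongr
  have hclosePQ : ∀ i ∈ S, ∀ j ∈ S,
      (P i - P j) ^ 2 + (Q i - Q j) ^ 2 ≤ (14 * r / R) ^ 2 := by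
    intro i hi j hj
    rw [hkey i j, div_pow]
    have hd := hchord i hi j hj
    have hd2 : dist (b i) (b j) ^ 2 ≤ (14 * r) ^ 2 := by
      nlinarith [dist_nonneg (x := b i) (y := b j)]
    gcongr
  -- sep for the T-version
  have hsepT : ∀ i ∈ T, ∀ j ∈ T, i ≠ j →
      (s / R) ^ 2 ≤ (P i - P j) ^ 2 + (Q i - Q j) ^ 2 := fun i _ j _ hne => hsepPQ i j hne
  by_cases hTe : T = ∅
  · rw [hTe]
    simp
    all_goals positivity
  · obtain ⟨i0, hi0⟩ := Finset.nonempty_of_ne_empty hTe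
    have hi0S : i0 ∈ S := (hmemT i0).mp hi0
    by_cases hcase : 28 * r ≤ R
    · -- regime B : rotate so that i0 is at angle 0
      set f : Fin k → ℝ := fun i => P i * P i0 + Q i * Q i0 with hfdef
      set g : Fin k → ℝ := fun i => Q i * P i0 - P i * Q i0 with hgdef
      have hcircf : ∀ i, f i ^ 2 + g i ^ 2 = 1 := by
        intro i
        simp only [hfdef, hgdef]
        linear_combination (P i0 ^ 2 + Q i0 ^ 2) * hPQ i + hPQ i0
      have hrot : ∀ i j, (f i - f j) ^ 2 + (g i - g j) ^ 2
          = (P i - P j) ^ 2 + (Q i - Q j) ^ 2 := by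
        intro i j
        simp only [hfdef, hgdef]
        linear_combination ((P i - P j) ^ 2 + (Q i - Q j) ^ 2) * hPQ i0
      have hfi0 : f i0 = 1 := by
        simp only [hfdef]
        linear_combination hPQ i0
      have hgi0 : g i0 = 0 := by simp only [hgdef]; ring
      have hrR : 14 * r / R ≤ 1 / 2 := by rw [div_le_iff₀ hR]; linarith
      have hrR0 : (0:ℝ) ≤ 14 * r / R := by positivity
      have hnear : ∀ i ∈ S, (f i - 1) ^ 2 + g i ^ 2 ≤ (14 * r / R) ^ 2 := by
        intro i hi
        have h1 := hrot i i0
        rw [hfi0, hgi0, sub_zero] at h1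
        rw [h1]
        exact hclosePQ i hi i0 hi0S
      have hhalf : ∀ i ∈ T, 1 / 2 ≤ f i := by
        intro i hi
        have h := hnear i ((hmemT i).mp hi)
        nlinarith [sq_nonneg (g i)]
      have hrange : ∀ i ∈ T, -(14 * r / R) ≤ g i ∧ g i ≤ -(14 * r / R) + 28 * r / R := by
        intro i hi
        have h := hnear i ((hmemT i).mp hi)
        have he : -(14 * r / R) + 28 * r / R = 14 * r / R := by ring
        rw [he]
        constructor
        · nlinarith [sq_nonneg (f i - 1), sq_nonneg (g i + 14 * r / R), hrR0]
        · nlinarith [sq_nonneg (f i - 1), sq_nonneg (g i - 14 * r / R), hrR0]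
      have hsepf : ∀ i ∈ T, ∀ j ∈ T, i ≠ j →
          (s / R) ^ 2 ≤ (f i - f j) ^ 2 + (g i - g j) ^ 2 := by
        intro i hi j hj hne
        rw [hrot i j]
        exact hsepT i hi j hj hne
      have hcount := arc_count T f g (-(14 * r / R)) (28 * r / R) (s / R)
        (div_pos hs hR) (by positivity) (fun i _ => hcircf i) hhalf hrange hsepf
      have heq : 2 * (28 * r / R) / (s / R) + 1 = 56 * (r / s) + 1 := by
        field_simp
        ring
      rw [heq] at hcount
      calc (T.card : ℝ) ≤ 56 * (r / s) + 1 := hcount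
        _ ≤ 1000 * max 1 (r / s) := by nlinarith
    · -- regime A : R < 28 r, cover the circle by four arcs
      push_neg at hcase
      set T1 : Finset (Fin k) := T.filter (fun i => 1 / 2 ≤ P i) with hT1
      set T2 : Finset (Fin k) := T.filter (fun i => 1 / 2 ≤ -P i) with hT2
      set T3 : Finset (Fin k) := T.filter (fun i => 1 / 2 ≤ Q i) with hT3
      set T4 : Finset (Fin k) := T.filter (fun i => 1 / 2 ≤ -Q i) with hT4
      have hcover : T ⊆ T1 ∪ T2 ∪ T3 ∪ T4 := by
        intro i hi
        simp only [hT1, hT2, hT3, hT4, Finset.mem_union, Finset.mem_filter]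
        have h := hPQ i
        by_cases h1 : 1 / 2 ≤ P i
        · exact Or.inl (Or.inl (Or.inl ⟨hi, h1⟩))
        · by_cases h2 : 1 / 2 ≤ -P i
          · exact Or.inl (Or.inl (Or.inr ⟨hi, h2⟩))
          · by_cases h3 : 1 / 2 ≤ Q i
            · exact Or.inl (Or.inr ⟨hi, h3⟩)
            · refine Or.inr ⟨hi, ?_⟩
              push_neg at h1 h2 h3
              nlinarith [mul_pos (show (0:ℝ) < 1 / 2 - P i by linarith)
                (show (0:ℝ) < 1 / 2 + P i by linarith)]
      have hcardn : T.card ≤ T1.card + T2.card + T3.card + T4.card := by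
        have h0 := Finset.card_le_card hcover
        have h2 := Finset.card_union_le (T1 ∪ T2 ∪ T3) T4
        have h3 := Finset.card_union_le (T1 ∪ T2) T3
        have h4 := Finset.card_union_le T1 T2
        omega
      have hcard : (T.card : ℝ) ≤ (T1.card : ℝ) + T2.card + T3.card + T4.card := by
        exact_mod_cast Nat.cast_le.mpr hcardn
      have hrangeQ : ∀ i : Fin k, -1 ≤ Q i ∧ Q i ≤ -1 + 2 := by
        intro i
        have h := hPQ i
        constructor
        · nlinarith [sq_nonneg (P i), sq_nonneg (Q i + 1)]
        · nlinarith [sq_nonneg (P i), sq_nonneg (Q i - 1)]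
      have hrangeP : ∀ i : Fin k, -1 ≤ P i ∧ P i ≤ -1 + 2 := by
        intro i
        have h := hPQ i
        constructor
        · nlinarith [sq_nonneg (Q i), sq_nonneg (P i + 1)]
        · nlinarith [sq_nonneg (Q i), sq_nonneg (P i - 1)]
      have hsR : 0 < s / R := div_pos hs hR
      have hb1 : (T1.card : ℝ) ≤ 2 * 2 / (s / R) + 1 := by
        apply arc_count T1 P Q (-1) 2 (s / R) hsR (by norm_num)
          (fun i _ => hPQ i) (fun i hi => (Finset.mem_filter.mp hi).2)
          (fun i _ => hrangeQ i)
        intro i _ j _ hne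
        exact hsepPQ i j hne
      have hb2 : (T2.card : ℝ) ≤ 2 * 2 / (s / R) + 1 := by
        apply arc_count T2 (fun i => -P i) Q (-1) 2 (s / R) hsR (by norm_num)
          (fun i _ => by linear_combination hPQ i) (fun i hi => (Finset.mem_filter.mp hi).2)
          (fun i _ => hrangeQ i)
        intro i _ j _ hne
        calc (s / R) ^ 2 ≤ (P i - P j) ^ 2 + (Q i - Q j) ^ 2 := hsepPQ i j hne
          _ = (-P i - -P j) ^ 2 + (Q i - Q j) ^ 2 := by ring
      have hb3 : (T3.card : ℝ) ≤ 2 * 2 / (s / R) + 1 := by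
        apply arc_count T3 Q P (-1) 2 (s / R) hsR (by norm_num)
          (fun i _ => by linear_combination hPQ i) (fun i hi => (Finset.mem_filter.mp hi).2)
          (fun i _ => hrangeP i)
        intro i _ j _ hne
        calc (s / R) ^ 2 ≤ (P i - P j) ^ 2 + (Q i - Q j) ^ 2 := hsepPQ i j hne
          _ = (Q i - Q j) ^ 2 + (P i - P j) ^ 2 := by ring
      have hb4 : (T4.card : ℝ) ≤ 2 * 2 / (s / R) + 1 := by
        apply arc_count T4 (fun i => -Q i) P (-1) 2 (s / R) hsR (by norm_num)
          (fun i _ => by linear_combination hPQ i) (fun i hi => (Finset.mem_filter.mp hi).2)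
          (fun i _ => hrangeP i)
        intro i _ j _ hne
        calc (s / R) ^ 2 ≤ (P i - P j) ^ 2 + (Q i - Q j) ^ 2 := hsepPQ i j hne
          _ = (-Q i - -Q j) ^ 2 + (P i - P j) ^ 2 := by ring
      have hsimp : 2 * 2 / (s / R) = 4 * (R / s) := by
        rw [div_div_eq_mul_div]
        ring
      have hRr : R / s ≤ 28 * (r / s) := by
        rw [div_le_iff₀ hs]
        have : 28 * (r / s) * s = 28 * r := by field_simp
        rw [this]
        linarith
      rw [hsimp] at hb1 hb2 hb3 hb4
      have hfinal : (T.card : ℝ) ≤ 16 * (R / s) + 4 := by linarith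
      calc (T.card : ℝ) ≤ 16 * (R / s) + 4 := hfinal
        _ ≤ 448 * (r / s) + 4 := by linarith
        _ ≤ 1000 * max 1 (r / s) := by nlinarith
end
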